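/- arXiv:1602.01739 — 9 statements merged into one kernel-verified Lean document; each statement's English description precedes it below -/
import Mathlib

section
/- Let G be a finite simple undirected graph, let s and t be two distinct vertices of G, let p ≥ 1 be an integer, and let F be a set of edges of G. Then G admits a (p,s,t)-routing in which every shared edge belongs to F if and only if every s-t cut C of G with C ∩ F = ∅ satisfies |C| ≥ p. -/
/-- The set of edges shared by at least two paths of the routing `P`. -/
def mseSharedEdges {V : Type*} {G : SimpleGraph V} {s t : V} {p : ℕ}
    (P : Fin p → G.Walk s t) : Set (Sym2 V) :=
  {e | ∃ i j : Fin p, i ≠ j ∧ e ∈ (P i).edges ∧ e ∈ (P j).edges}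

/-- `C` is an `s`-`t` cut in `G`: a set of edges of `G` whose deletion disconnects `s` from `t`. -/
def mseIsCut {V : Type*} (G : SimpleGraph V) (s t : V) (C : Set (Sym2 V)) : Prop :=
  C ⊆ G.edgeSet ∧ ¬ (G.deleteEdges C).Reachable s t

/-!
Give the edges of `F` unbounded capacity and all other edges capacity one. While the cut
condition holds, an augmenting path exists in the residual graph (otherwise the vertices reachable
from `s` in it bound a cut avoiding `F` whose size is the current flow value), so there is an
integral `s`-`t` flow of value `p`. Peeling off `p` paths that follow the positive darts of the
flow lowers `|f|` by one on every edge a peeled path uses; an edge outside `F` has `|f| ≤ 1`, so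
it lies on at most one path. Conversely, every path crosses a cut `C`, and two paths cannot
cross it at the same edge when `C` avoids `F`.
-/

open Finset

theorem List.count_map_sym2Mk {α : Type*} [DecidableEq α] {u v : α} (huv : u ≠ v)
    (l : List (α × α)) :
    (l.map fun q => s(q.1, q.2)).count s(u, v) = l.count (u, v) + l.count (v, u) := by
  induction l with
  | nil => rfl
  | cons x l ih =>
    have hx : s(x.1, x.2) = s(u, v) ↔ x = (u, v) ∨ x = (v, u) :=
      Sym2.mk_eq_mk_iff (p := x) (q := (u, v))
    have hne : (u, v) ≠ (v, u) := by simp [huv]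
    simp only [List.map_cons, List.count_cons, ih, beq_iff_eq, hx]
    by_cases h1 : x = (u, v) <;> by_cases h2 : x = (v, u) <;> simp_all <;> omega

theorem Relation.exists_finset_closed_of_not_reflTransGen {α : Type*} [Fintype α]
    {R : α → α → Prop} {a b : α} (h : ¬ Relation.ReflTransGen R a b) :
    ∃ S : Finset α, a ∈ S ∧ b ∉ S ∧ ∀ x ∈ S, ∀ y, R x y → y ∈ S := by
  classical
  refine ⟨univ.filter (Relation.ReflTransGen R a), by simp [Relation.ReflTransGen.refl], by simpa,
    fun x hx y hxy => ?_⟩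
  simp only [mem_filter, mem_univ, true_and] at hx ⊢
  exact hx.tail hxy

namespace SimpleGraph

variable {V : Type*} {G : SimpleGraph V}

namespace Walk

def dartPairs {a b : V} (W : G.Walk a b) : List (V × V) := W.darts.map Dart.toProd

@[simp] theorem dartPairs_nil {a : V} : (nil : G.Walk a a).dartPairs = [] := rfl

@[simp] theorem dartPairs_cons {a b c : V} (h : G.Adj a b) (W : G.Walk b c) :
    (cons h W).dartPairs = (a, b) :: W.dartPairs := rfl

theorem adj_of_mem_dartPairs {a b : V} {W : G.Walk a b} {q : V × V} (hq : q ∈ W.dartPairs) :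
    G.Adj q.1 q.2 := by
  obtain ⟨d, -, rfl⟩ := List.mem_map.1 hq
  exact d.adj

theorem edges_eq_map_dartPairs {a b : V} (W : G.Walk a b) :
    W.edges = W.dartPairs.map fun q => s(q.1, q.2) := by
  simp only [edges, dartPairs, List.map_map]
  rfl

theorem count_edges_eq [DecidableEq V] {a b u v : V} (W : G.Walk a b) (huv : u ≠ v) :
    W.edges.count s(u, v) = W.dartPairs.count (u, v) + W.dartPairs.count (v, u) := by
  rw [edges_eq_map_dartPairs, List.count_map_sym2Mk huv]

theorem IsTrail.count_dartPairs_add_le_one [DecidableEq V] {a b u v : V} {W : G.Walk a b}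
    (hW : W.IsTrail) (huv : u ≠ v) : W.dartPairs.count (u, v) + W.dartPairs.count (v, u) ≤ 1 :=
  W.count_edges_eq huv ▸ hW.count_edges_le_one _

def flow [DecidableEq V] {a b : V} (W : G.Walk a b) (u v : V) : ℤ :=
  W.dartPairs.count (u, v) - W.dartPairs.count (v, u)

theorem flow_cons [DecidableEq V] {a b c : V} (h : G.Adj a b) (W : G.Walk b c) (u v : V) :
    (cons h W).flow u v =
      W.flow u v + ((if (a, b) = (u, v) then 1 else 0) - (if (a, b) = (v, u) then 1 else 0)) := by
  simp only [flow, dartPairs_cons, List.count_cons, beq_iff_eq]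
  split_ifs <;> push_cast <;> ring

theorem sum_flow [Fintype V] [DecidableEq V] {a b : V} (W : G.Walk a b) (v : V) :
    ∑ u, W.flow v u = (if v = a then 1 else 0) - (if v = b then 1 else 0) := by
  induction W with
  | nil => simp [flow]
  | cons h W ih =>
    simp only [flow_cons, sum_add_distrib, sum_sub_distrib, ih, Prod.mk.injEq, ite_and]
    simp [eq_comm]

end Walk

/-- An integral `s`-`t` flow of value `q`, recorded as the net flow `f u v` from `u` to `v`. -/
structure IsIntFlow [Fintype V] (G : SimpleGraph V) (s t : V) (f : V → V → ℤ) (q : ℤ) : Prop where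
  antisymm : ∀ u v, f u v = -f v u
  adj_of_ne_zero : ∀ u v, f u v ≠ 0 → G.Adj u v
  sum_eq_zero : ∀ v, v ≠ s → v ≠ t → ∑ u, f v u = 0
  sum_source : ∑ u, f s u = q

namespace IsIntFlow

variable [Fintype V] {s t : V} {f g : V → V → ℤ} {q r : ℤ}

theorem zero : IsIntFlow G s t 0 0 where
  antisymm := by simp
  adj_of_ne_zero := by simp
  sum_eq_zero := by simp
  sum_source := by simp

theorem add (hf : IsIntFlow G s t f q) (hg : IsIntFlow G s t g r) :
    IsIntFlow G s t (f + g) (q + r) where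
  antisymm u v := by simp only [Pi.add_apply, hf.antisymm u v, hg.antisymm u v]; ring
  adj_of_ne_zero u v h := by
    by_contra hadj
    have hfuv : f u v = 0 := by_contra fun h' => hadj (hf.adj_of_ne_zero u v h')
    have hguv : g u v = 0 := by_contra fun h' => hadj (hg.adj_of_ne_zero u v h')
    simp [hfuv, hguv] at h
  sum_eq_zero v hs ht := by
    simp only [Pi.add_apply, sum_add_distrib, hf.sum_eq_zero v hs ht, hg.sum_eq_zero v hs ht,
      add_zero]
  sum_source := by simp only [Pi.add_apply, sum_add_distrib, hf.sum_source, hg.sum_source]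

theorem neg (hf : IsIntFlow G s t f q) : IsIntFlow G s t (-f) (-q) where
  antisymm u v := by simp [hf.antisymm u v]
  adj_of_ne_zero u v h := hf.adj_of_ne_zero u v (by simpa using h)
  sum_eq_zero v hs ht := by simp [hf.sum_eq_zero v hs ht]
  sum_source := by simp [hf.sum_source]

theorem sub (hf : IsIntFlow G s t f q) (hg : IsIntFlow G s t g r) :
    IsIntFlow G s t (f - g) (q - r) := by
  simpa only [sub_eq_add_neg] using hf.add hg.neg

theorem value_eq_sum_interedges [DecidableEq V] [DecidableRel G.Adj] (hf : IsIntFlow G s t f q)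
    {S : Finset V} (hs : s ∈ S) (ht : t ∉ S) : q = ∑ x ∈ G.interedges S Sᶜ, f x.1 x.2 := by
  have hout : ∑ v ∈ S, ∑ u, f v u = q := by
    rw [sum_eq_single_of_mem s hs fun v hv hvs =>
      hf.sum_eq_zero v hvs (ne_of_mem_of_not_mem hv ht), hf.sum_source]
  have hinner : ∑ v ∈ S, ∑ u ∈ S, f v u = 0 := by
    have : ∑ v ∈ S, ∑ u ∈ S, f v u = -∑ v ∈ S, ∑ u ∈ S, f v u := by
      conv_rhs => rw [sum_comm]
      simp only [← sum_neg_distrib, ← hf.antisymm]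
    linarith
  have hcross : ∑ x ∈ G.interedges S Sᶜ, f x.1 x.2 = ∑ x ∈ S ×ˢ Sᶜ, f x.1 x.2 :=
    sum_filter_of_ne fun x _ h => hf.adj_of_ne_zero x.1 x.2 h
  calc q = ∑ v ∈ S, (∑ u ∈ S, f v u + ∑ u ∈ Sᶜ, f v u) := by
        simp only [sum_add_sum_compl, hout]
    _ = ∑ x ∈ G.interedges S Sᶜ, f x.1 x.2 := by
        rw [sum_add_distrib, hinner, zero_add, hcross, sum_product']

end IsIntFlow

theorem Walk.isIntFlow_flow [Fintype V] [DecidableEq V] {s t : V} (hst : s ≠ t)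
    (W : G.Walk s t) :
    IsIntFlow G s t W.flow 1 where
  antisymm u v := by simp [Walk.flow]
  adj_of_ne_zero u v h := by
    by_contra hadj
    have h1 : W.dartPairs.count (u, v) = 0 :=
      List.count_eq_zero.2 fun hm => hadj (Walk.adj_of_mem_dartPairs hm)
    have h2 : W.dartPairs.count (v, u) = 0 :=
      List.count_eq_zero.2 fun hm => hadj (Walk.adj_of_mem_dartPairs hm).symm
    simp [Walk.flow, h1, h2] at h
  sum_eq_zero v hs ht := by simp [W.sum_flow, hs, ht]
  sum_source := by simp [W.sum_flow, hst]

theorem exists_isPath_of_reflTransGen [DecidableEq V] {R : V → V → Prop}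
    (hR : ∀ u v, R u v → G.Adj u v) {s t : V} (h : Relation.ReflTransGen R s t) :
    ∃ P : G.Walk s t, P.IsPath ∧ ∀ q ∈ P.dartPairs, R q.1 q.2 := by
  obtain ⟨W, hW⟩ : ∃ W : G.Walk s t, ∀ q ∈ W.dartPairs, R q.1 q.2 := by
    induction h using Relation.ReflTransGen.head_induction_on with
    | refl => exact ⟨.nil, by simp⟩
    | head hab _ ih =>
      obtain ⟨W, hW⟩ := ih
      exact ⟨.cons (hR _ _ hab) W, by simpa [hab] using hW⟩
  refine ⟨W.bypass, W.bypass_isPath, fun q hq => hW q ?_⟩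
  obtain ⟨d, hd, rfl⟩ := List.mem_map.1 hq
  exact List.mem_map_of_mem (W.darts_bypass_subset_darts hd)

theorem mseIsCut_image_interedges [Fintype V] [DecidableEq V] [DecidableRel G.Adj] {s t : V}
    {S : Finset V} (hs : s ∈ S) (ht : t ∉ S) :
    mseIsCut G s t ↑((G.interedges S Sᶜ).image fun x => s(x.1, x.2)) := by
  refine ⟨?_, fun ⟨W⟩ => ?_⟩
  · intro e he
    obtain ⟨x, hx, rfl⟩ := mem_image.1 he
    exact ((mem_interedges_iff G).1 hx).2.2
  · obtain ⟨d, -, hd, hd'⟩ := W.exists_boundary_dart S hs ht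
    refine (deleteEdges_adj.1 d.adj).2 (mem_image_of_mem _ ?_)
    exact (mem_interedges_iff G).2 ⟨hd, mem_compl.2 hd', (deleteEdges_adj.1 d.adj).1⟩

/-- Edges of `F` have unbounded capacity and all other edges capacity one. -/
def residualAdj (G : SimpleGraph V) (F : Set (Sym2 V)) (f : V → V → ℤ) (u v : V) : Prop :=
  G.Adj u v ∧ (s(u, v) ∈ F ∨ f u v ≤ 0)

section Augmentation

variable [DecidableEq V] {s t : V} {F : Set (Sym2 V)} {f : V → V → ℤ} {q : ℤ}

theorem add_flow_le_one (hcap : ∀ u v, s(u, v) ∉ F → f u v ≤ 1) {P : G.Walk s t} (hP : P.IsTrail)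
    (hPR : ∀ x ∈ P.dartPairs, residualAdj G F f x.1 x.2) {u v : V} (huv : s(u, v) ∉ F) :
    f u v + P.flow u v ≤ 1 := by
  have hf := hcap u v huv
  obtain rfl | hne := eq_or_ne u v
  · simpa [Walk.flow] using hf
  have hP1 := hP.count_dartPairs_add_le_one hne
  unfold Walk.flow
  obtain h0 | hpos := Nat.eq_zero_or_pos (P.dartPairs.count (u, v))
  · omega
  · have : f u v ≤ 0 := (hPR _ (List.count_pos_iff.1 hpos)).2.resolve_left huv
    omega

variable [Fintype V]

theorem IsIntFlow.exists_cut_of_not_reflTransGen (hf : IsIntFlow G s t f q)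
    (hcap : ∀ u v, s(u, v) ∉ F → f u v ≤ 1) (h : ¬ Relation.ReflTransGen (residualAdj G F f) s t) :
    ∃ C, mseIsCut G s t C ∧ C ∩ F = ∅ ∧ (C.ncard : ℤ) ≤ q := by
  classical
  obtain ⟨S, hs, ht, hS⟩ := Relation.exists_finset_closed_of_not_reflTransGen h
  have hsat : ∀ x ∈ G.interedges S Sᶜ, s(x.1, x.2) ∉ F ∧ f x.1 x.2 = 1 := by
    intro x hx
    obtain ⟨hx1, hx2, hadj⟩ := (mem_interedges_iff G).1 hx
    have hR : ¬ residualAdj G F f x.1 x.2 := fun hR => mem_compl.1 hx2 (hS _ hx1 _ hR)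
    simp only [residualAdj, not_and, not_or, not_le] at hR
    obtain ⟨hF, hpos⟩ := hR hadj
    exact ⟨hF, le_antisymm (hcap _ _ hF) hpos⟩
  refine ⟨_, mseIsCut_image_interedges hs ht, ?_, ?_⟩
  · refine Set.eq_empty_iff_forall_notMem.2 fun e ⟨he, heF⟩ => ?_
    obtain ⟨x, hx, rfl⟩ := mem_image.1 he
    exact (hsat x hx).1 heF
  · rw [Set.ncard_coe_finset, hf.value_eq_sum_interedges hs ht,
      sum_congr rfl fun x hx => (hsat x hx).2, sum_const, nsmul_one]
    exact_mod_cast card_image_le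

theorem exists_isIntFlow_of_le_ncard (hst : s ≠ t) (p : ℕ)
    (hcut : ∀ C, mseIsCut G s t C → C ∩ F = ∅ → p ≤ C.ncard) :
    ∃ f, IsIntFlow G s t f p ∧ ∀ u v, s(u, v) ∉ F → f u v ≤ 1 := by
  induction p with
  | zero => exact ⟨0, IsIntFlow.zero, by simp⟩
  | succ p ih =>
    obtain ⟨f, hf, hcap⟩ := ih fun C hC hCF => (Nat.le_succ p).trans (hcut C hC hCF)
    by_cases hreach : Relation.ReflTransGen (residualAdj G F f) s t
    · obtain ⟨P, hP, hPR⟩ := exists_isPath_of_reflTransGen (fun _ _ h => h.1) hreach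
      refine ⟨f + P.flow, by exact_mod_cast hf.add (P.isIntFlow_flow hst),
        fun u v huv => add_flow_le_one hcap hP.isTrail hPR huv⟩
    · obtain ⟨C, hC, hCF, hCp⟩ := hf.exists_cut_of_not_reflTransGen hcap hreach
      have := hcut C hC hCF
      omega

end Augmentation

section Decomposition

variable [DecidableEq V] {s t : V} {f : V → V → ℤ} {q : ℤ}

theorem natAbs_sub_flow_add_count_edges {P : G.Walk s t} (hP : P.IsTrail)
    (hPf : ∀ x ∈ P.dartPairs, 0 < f x.1 x.2) {u v : V} (huv : u ≠ v) (hfuv : f u v = -f v u) :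
    (f u v - P.flow u v).natAbs + P.edges.count s(u, v) = (f u v).natAbs := by
  have hP1 := hP.count_dartPairs_add_le_one huv
  have hfwd : 0 < P.dartPairs.count (u, v) → 0 < f u v := fun h => hPf _ (List.count_pos_iff.1 h)
  have hbwd : 0 < P.dartPairs.count (v, u) → 0 < f v u := fun h => hPf _ (List.count_pos_iff.1 h)
  rw [P.count_edges_eq huv]
  unfold Walk.flow
  omega

variable [Fintype V]

theorem IsIntFlow.reflTransGen_pos (hf : IsIntFlow G s t f q) (hq : 0 < q) :
    Relation.ReflTransGen (fun u v => 0 < f u v) s t := by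
  classical
  by_contra h
  obtain ⟨S, hs, ht, hS⟩ := Relation.exists_finset_closed_of_not_reflTransGen h
  have : q ≤ 0 := by
    rw [hf.value_eq_sum_interedges hs ht]
    refine sum_nonpos fun x hx => not_lt.1 fun hpos => ?_
    obtain ⟨hx1, hx2, -⟩ := (mem_interedges_iff G).1 hx
    exact mem_compl.1 hx2 (hS _ hx1 _ hpos)
  omega

theorem IsIntFlow.exists_paths (hst : s ≠ t) (p : ℕ) (hf : IsIntFlow G s t f p) :
    ∃ P : Fin p → G.Walk s t, (∀ i, (P i).IsPath) ∧
      ∀ u v, u ≠ v → ∑ i, (P i).edges.count s(u, v) ≤ (f u v).natAbs := by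
  induction p generalizing f with
  | zero => exact ⟨Fin.elim0, fun i => i.elim0, by simp⟩
  | succ p ih =>
    obtain ⟨Q, hQ, hQf⟩ :=
      exists_isPath_of_reflTransGen (fun u v h => hf.adj_of_ne_zero u v h.ne')
        (hf.reflTransGen_pos (by omega))
    obtain ⟨P, hP, hPf⟩ := ih (f := f - Q.flow) (by simpa using hf.sub (Q.isIntFlow_flow hst))
    refine ⟨Fin.snoc P Q, Fin.lastCases (by simpa using hQ) fun i => by simpa using hP i,
      fun u v huv => ?_⟩
    rw [Fin.sum_univ_castSucc]
    simp only [Fin.snoc_castSucc, Fin.snoc_last]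
    have hQuv := natAbs_sub_flow_add_count_edges hQ.isTrail hQf huv (hf.antisymm u v)
    have hPuv := hPf u v huv
    simp only [Pi.sub_apply] at hPuv
    omega

end Decomposition

theorem le_ncard_of_mseSharedEdges_subset [Finite V] {s t : V} {p : ℕ} (P : Fin p → G.Walk s t)
    {F C : Set (Sym2 V)} (hPF : mseSharedEdges P ⊆ F) (hC : mseIsCut G s t C) (hCF : C ∩ F = ∅) :
    p ≤ C.ncard := by
  have hmeet : ∀ i, ∃ e ∈ C, e ∈ (P i).edges := by
    intro i
    by_contra! h
    exact hC.2 ⟨(P i).toDeleteEdges C fun e he heC => h e heC he⟩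
  choose e heC heP using hmeet
  have hinj : Function.Injective fun i => (⟨e i, heC i⟩ : C) := by
    intro i j hij
    by_contra hne
    have hij' : e i = e j := congrArg Subtype.val hij
    have hshared : e i ∈ mseSharedEdges P := ⟨i, j, hne, heP i, hij' ▸ heP j⟩
    exact Set.eq_empty_iff_forall_notMem.1 hCF _ ⟨heC i, hPF hshared⟩
  simpa using Nat.card_le_card_of_injective _ hinj

theorem notMem_mseSharedEdges_of_sum_count_le_one [DecidableEq V] {s t : V} {p : ℕ}
    (P : Fin p → G.Walk s t) {e : Sym2 V} (he : ∑ i, (P i).edges.count e ≤ 1) :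
    e ∉ mseSharedEdges P := by
  rintro ⟨i, j, hij, hi, hj⟩
  have hpair := sum_le_sum_of_subset (f := fun k => (P k).edges.count e) (subset_univ {i, j})
  rw [sum_pair hij] at hpair
  have := List.count_pos_iff.2 hi
  have := List.count_pos_iff.2 hj
  omega

end SimpleGraph

theorem stmt_2_general {V : Type*} [Fintype V] (G : SimpleGraph V) (s t : V) (hst : s ≠ t)
    (p : ℕ) (F : Set (Sym2 V)) :
    (∃ P : Fin p → G.Walk s t, (∀ i, (P i).IsPath) ∧ mseSharedEdges P ⊆ F) ↔
    (∀ C : Set (Sym2 V), mseIsCut G s t C → C ∩ F = ∅ → p ≤ C.ncard) := by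
  classical
  refine ⟨fun ⟨P, _, hPF⟩ C hC hCF => G.le_ncard_of_mseSharedEdges_subset P hPF hC hCF,
    fun hcut => ?_⟩
  obtain ⟨f, hf, hcap⟩ := G.exists_isIntFlow_of_le_ncard hst p hcut
  obtain ⟨P, hP, hPf⟩ := hf.exists_paths hst p
  refine ⟨P, hP, fun e he => by_contra fun heF => ?_⟩
  induction e using Sym2.ind with
  | h u v =>
    have huv : u ≠ v := by
      obtain ⟨i, -, -, hi, -⟩ := he
      exact ((P i).adj_of_mem_edges hi).ne
    have hflow : (f u v).natAbs ≤ 1 := by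
      have := hcap u v heF
      have := hcap v u (Sym2.eq_swap ▸ heF)
      have := hf.antisymm u v
      omega
    exact SimpleGraph.notMem_mseSharedEdges_of_sum_count_le_one P ((hPf u v huv).trans hflow) he

theorem stmt_2 {V : Type*} [Fintype V] (G : SimpleGraph V) (s t : V) (hst : s ≠ t)
    (p : ℕ) (hp : 1 ≤ p) (F : Set (Sym2 V)) (hF : F ⊆ G.edgeSet) :
    (∃ P : Fin p → G.Walk s t, (∀ i, (P i).IsPath) ∧ mseSharedEdges P ⊆ F) ↔
    (∀ C : Set (Sym2 V), mseIsCut G s t C → C ∩ F = ∅ → p ≤ C.ncard) :=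
  stmt_2_general G s t hst p F
end

section
/- Let G be a finite simple undirected graph, let s and t be two distinct vertices of G, and let p ≥ 1 and k ≥ 0 be integers. Suppose that G admits a (p,s,t)-routing with at most k shared edges and that G has a minimal s-t cut of size at most p−1. Then G admits a (p,s,t)-routing with at most k shared edges in which every shared edge belongs to some minimal s-t cut of G of size at most p−1. -/
/-- `C` is a minimal `s`-`t` cut: no proper subset of `C` is an `s`-`t` cut. -/
def mseIsMinCut {V : Type*} (G : SimpleGraph V) (s t : V) (C : Set (Sym2 V)) : Prop :=
  mseIsCut G s t C ∧ ∀ C' ⊂ C, ¬ mseIsCut G s t C'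



/-!
Take a routing with the fewest shared edges and suppose that some shared edge `e` lies in no
minimal cut of size `< p`. Make the other shared edges uncapacitated and give all remaining edges
capacity one. A cut avoiding the uncapacitated edges with fewer than `p` edges contains a minimal
cut of size `< p`, and by pigeonhole two of the `p` paths cross it in a common edge, which is
shared and different from `e`. So every such cut has at least `p` edges, and max-flow/min-cut
(augmenting paths, then a decomposition of the flow into paths) yields a routing whose shared
edges all lie among the old ones other than `e`, contradicting minimality.
-/

open SimpleGraph Finset

section Cuts

variable {V : Type*} {G : SimpleGraph V} {s t : V} {C : Set (Sym2 V)}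

lemma mseIsCut.exists_mem_edges (hC : mseIsCut G s t C) (w : G.Walk s t) :
    ∃ e ∈ w.edges, e ∈ C := by
  by_contra! h
  exact hC.2 ⟨w.transfer (G.deleteEdges C) fun e he => by
    rw [edgeSet_deleteEdges]
    exact ⟨w.edges_subset_edgeSet he, h e he⟩⟩

lemma mseIsCut.exists_mem_mseSharedEdges [Finite V] {p : ℕ} (hC : mseIsCut G s t C)
    (hCp : C.ncard < p) (P : Fin p → G.Walk s t) : ∃ e ∈ C, e ∈ mseSharedEdges P := by
  choose e he heC using fun i => hC.exists_mem_edges (P i)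
  obtain ⟨i, -, j, -, hij, heij⟩ := Set.exists_ne_map_eq_of_ncard_lt_of_maps_to
    (s := Set.univ) (by simpa using hCp) fun i _ => heC i
  exact ⟨e i, heC i, i, j, hij, he i, heij ▸ he j⟩

lemma mseIsCut.exists_mseIsMinCut_subset [Finite V] (hC : mseIsCut G s t C) :
    ∃ D ⊆ C, mseIsMinCut G s t D := by
  obtain ⟨D, hDC, hD⟩ := exists_minimal_le_of_wellFoundedLT (mseIsCut G s t) C hC
  exact ⟨D, hDC, hD.prop, fun C' hC' hcut => hC'.2 (hD.2 hcut hC'.1)⟩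

variable [Fintype V] [DecidableEq V] [DecidableRel G.Adj] {R : Finset V}

lemma card_image_interedges_compl :
    ((G.interedges R Rᶜ).image fun z => s(z.1, z.2)).card = (G.interedges R Rᶜ).card := by
  refine card_image_of_injOn fun z hz z' hz' hzz' => ?_
  rw [mem_coe, mem_interedges_iff, mem_compl] at hz hz'
  rcases Sym2.eq_iff.1 hzz' with ⟨h₁, h₂⟩ | ⟨h₁, -⟩
  · exact Prod.ext h₁ h₂
  · exact absurd (h₁ ▸ hz.1) hz'.2.1

lemma mseIsCut_image_interedges_compl (hs : s ∈ R) (ht : t ∉ R) :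
    mseIsCut G s t ↑((G.interedges R Rᶜ).image fun z => s(z.1, z.2)) := by
  refine ⟨fun e he => ?_, fun ⟨w⟩ => ?_⟩
  · obtain ⟨z, hz, rfl⟩ := mem_image.1 he
    exact (G.mem_interedges_iff.1 hz).2.2
  · obtain ⟨d, -, hd₁, hd₂⟩ := w.exists_boundary_dart (↑R) hs ht
    have hadj := d.adj
    rw [deleteEdges_adj] at hadj
    exact hadj.2 (mem_image_of_mem _
      ((G.mk_mem_interedges_iff).2 ⟨hd₁, by simpa using hd₂, hadj.1⟩))

end Cuts

section WalkFlow

variable {V : Type*} [DecidableEq V] {G : SimpleGraph V}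

def walkFlow {u v : V} (w : G.Walk u v) (x y : V) : ℤ :=
  (w.darts.map Dart.toProd).count (x, y) - (w.darts.map Dart.toProd).count (y, x)

lemma walkFlow_antisymm {u v : V} (w : G.Walk u v) (x y : V) :
    walkFlow w x y = -walkFlow w y x := by
  simp only [walkFlow, neg_sub]

lemma walkFlow_cons {u v z : V} (h : G.Adj u v) (w : G.Walk v z) (x y : V) :
    walkFlow (.cons h w) x y =
      walkFlow w x y + (if x = u ∧ y = v then 1 else 0) - (if x = v ∧ y = u then 1 else 0) := by
  simp only [walkFlow, Walk.darts_cons, List.map_cons, List.count_cons, beq_iff_eq, Prod.mk.injEq,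
    @eq_comm _ u, @eq_comm _ v, and_comm (a := y = u)]
  push_cast
  ring

lemma exists_dart_of_walkFlow_pos {u v x y : V} {w : G.Walk u v} (h : 0 < walkFlow w x y) :
    ∃ d ∈ w.darts, d.fst = x ∧ d.snd = y := by
  have hpos : 0 < (w.darts.map Dart.toProd).count (x, y) := by
    unfold walkFlow at h
    omega
  obtain ⟨d, hd, hxy⟩ := List.mem_map.1 (List.count_pos_iff.1 hpos)
  exact ⟨d, hd, Prod.ext_iff.1 hxy⟩

lemma exists_dart_of_walkFlow_ne_zero {u v x y : V} {w : G.Walk u v} (h : walkFlow w x y ≠ 0) :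
    ∃ d ∈ w.darts, d.edge = s(x, y) := by
  rcases h.lt_or_gt with h | h
  · rw [walkFlow_antisymm, Left.neg_neg_iff] at h
    obtain ⟨d, hd, rfl, rfl⟩ := exists_dart_of_walkFlow_pos h
    exact ⟨d, hd, Sym2.eq_swap⟩
  · obtain ⟨d, hd, rfl, rfl⟩ := exists_dart_of_walkFlow_pos h
    exact ⟨d, hd, rfl⟩

lemma SimpleGraph.Walk.IsPath.walkFlow_le_one {u v : V} {w : G.Walk u v} (hw : w.IsPath)
    (x y : V) : walkFlow w x y ≤ 1 := by
  have hnd := (Walk.darts_nodup_of_support_nodup hw.support_nodup).map Dart.toProd_injective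
  have := List.nodup_iff_count_le_one.1 hnd (x, y)
  unfold walkFlow
  omega

lemma SimpleGraph.Walk.IsPath.walkFlow_of_mem_darts {u v : V} {w : G.Walk u v} (hw : w.IsPath)
    {d : G.Dart} (hd : d ∈ w.darts) : walkFlow w d.fst d.snd = 1 := by
  have hnd := (Walk.darts_nodup_of_support_nodup hw.support_nodup).map Dart.toProd_injective
  have hrev : (d.snd, d.fst) ∉ w.darts.map Dart.toProd := by
    intro hmem
    obtain ⟨d', hd', hd'd⟩ := List.mem_map.1 hmem
    have : d' = d := List.inj_on_of_nodup_map hw.isTrail.edges_nodup hd' hd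
      (by rw [Dart.edge, Dart.edge, hd'd, Sym2.eq_swap])
    subst this
    exact d'.adj.ne (Prod.ext_iff.1 hd'd).1
  rw [walkFlow, List.count_eq_one_of_mem hnd (List.mem_map_of_mem hd), List.count_eq_zero.2 hrev]
  rfl

end WalkFlow

section FlowBasics

variable {V : Type*} [Fintype V]

def netOut (φ : V → V → ℤ) (v : V) : ℤ := ∑ u, φ v u

lemma netOut_add (φ ψ : V → V → ℤ) (v : V) :
    netOut (φ + ψ) v = netOut φ v + netOut ψ v :=
  sum_add_distrib

lemma netOut_sub (φ ψ : V → V → ℤ) (v : V) :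
    netOut (φ - ψ) v = netOut φ v - netOut ψ v :=
  sum_sub_distrib _ _

variable [DecidableEq V] {G : SimpleGraph V}

lemma sum_netOut_eq_sum_product_compl {φ : V → V → ℤ} (hφ : ∀ x y, φ x y = -φ y x)
    (R : Finset V) : ∑ v ∈ R, netOut φ v = ∑ z ∈ R ×ˢ Rᶜ, φ z.1 z.2 := by
  have hinner : ∑ v ∈ R, ∑ u ∈ R, φ v u = 0 := by
    have h : ∑ v ∈ R, ∑ u ∈ R, φ v u = -∑ v ∈ R, ∑ u ∈ R, φ v u := by
      conv_rhs => rw [sum_comm]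
      simp only [← sum_neg_distrib, ← hφ]
    linarith
  simp only [netOut, ← sum_add_sum_compl R, sum_add_distrib, hinner, zero_add, sum_product]

lemma netOut_walkFlow {u v : V} (w : G.Walk u v) (x : V) :
    netOut (walkFlow w) x = (if x = u then 1 else 0) - (if x = v then 1 else 0) := by
  induction w with
  | nil => simp [netOut, walkFlow]
  | cons h w ih =>
    have hsum (a b : V) :
        ∑ y, (if x = a ∧ y = b then (1 : ℤ) else 0) = if x = a then 1 else 0 := by
      by_cases hx : x = a <;> simp [hx]
    simp only [netOut, walkFlow_cons, sum_add_distrib, sum_sub_distrib, hsum] at ih ⊢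
    rw [ih]
    ring

lemma exists_isPath_or_exists_closed_finset (r : V → V → Prop) (s t : V) :
    (∃ w : G.Walk s t, w.IsPath ∧ ∀ d ∈ w.darts, r d.fst d.snd) ∨
      ∃ R : Finset V, s ∈ R ∧ t ∉ R ∧
        ∀ v ∈ R, ∀ u ∉ R, G.Adj v u → ¬ r v u := by
  classical
  let R : Finset V := {v | ∃ w : G.Walk s v, ∀ d ∈ w.darts, r d.fst d.snd}
  by_cases ht : t ∈ R
  · obtain ⟨w, hw⟩ := (mem_filter.1 ht).2
    exact .inl ⟨w.bypass, w.bypass_isPath, fun d hd => hw d (w.darts_bypass_subset_darts hd)⟩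
  · refine .inr ⟨R, mem_filter.2 ⟨mem_univ _, .nil, by simp⟩, ht,
      fun v hv u hu hadj hr => hu ?_⟩
    obtain ⟨w, hw⟩ := (mem_filter.1 hv).2
    refine mem_filter.2 ⟨mem_univ _, w.concat hadj, fun d hd => ?_⟩
    rw [Walk.darts_concat, List.concat_eq_append, List.mem_append, List.mem_singleton] at hd
    rcases hd with hd | rfl
    exacts [hw d hd, hr]

end FlowBasics

section UnitFlow

variable {V : Type*} [Fintype V] [DecidableEq V] {G : SimpleGraph V} {T : Set (Sym2 V)}
  {s t : V} {p q : ℕ} {φ : V → V → ℤ}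

/-- `φ x y` is the net flow from `x` to `y`; edges of `T` are uncapacitated, all other edges of
`G` have capacity one. -/
structure IsUnitFlow (G : SimpleGraph V) (T : Set (Sym2 V)) (s t : V) (q : ℕ)
    (φ : V → V → ℤ) : Prop where
  antisymm : ∀ x y, φ x y = -φ y x
  adj_of_ne_zero : ∀ x y, φ x y ≠ 0 → G.Adj x y
  le_one : ∀ x y, s(x, y) ∉ T → φ x y ≤ 1
  netOut_eq : ∀ v, netOut φ v = q * ((if v = s then 1 else 0) - (if v = t then 1 else 0))

lemma isUnitFlow_zero : IsUnitFlow G T s t 0 0 where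
  antisymm := by simp
  adj_of_ne_zero := by simp
  le_one := by simp
  netOut_eq := by simp [netOut]

namespace IsUnitFlow

lemma sum_netOut {R : Finset V} (hφ : IsUnitFlow G T s t q φ) (hs : s ∈ R) (ht : t ∉ R) :
    ∑ v ∈ R, netOut φ v = q := by
  simp [hφ.netOut_eq, ← mul_sum, sum_sub_distrib, sum_ite_eq', hs, ht]

lemma abs_le_one (hφ : IsUnitFlow G T s t q φ) {x y : V} (hxy : s(x, y) ∉ T) : |φ x y| ≤ 1 :=
  abs_le.2
    ⟨by linarith [hφ.antisymm x y, hφ.le_one y x (Sym2.eq_swap ▸ hxy)], hφ.le_one x y hxy⟩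

lemma add_walkFlow (hφ : IsUnitFlow G T s t q φ) {w : G.Walk s t} (hw : w.IsPath)
    (hres : ∀ d ∈ w.darts, s(d.fst, d.snd) ∈ T ∨ φ d.fst d.snd < 1) :
    IsUnitFlow G T s t (q + 1) (φ + walkFlow w) where
  antisymm x y := by simp only [Pi.add_apply, hφ.antisymm x y, walkFlow_antisymm w x y]; ring
  adj_of_ne_zero x y h := by
    by_cases hφxy : φ x y = 0
    · obtain ⟨d, -, hd⟩ := exists_dart_of_walkFlow_ne_zero (by simpa [hφxy] using h)
      exact G.mem_edgeSet.1 (hd ▸ d.edge_mem)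
    · exact hφ.adj_of_ne_zero x y hφxy
  le_one x y hxy := by
    have := hw.walkFlow_le_one x y
    have := hφ.le_one x y hxy
    by_cases hpos : 0 < walkFlow w x y
    · obtain ⟨d, hd, rfl, rfl⟩ := exists_dart_of_walkFlow_pos hpos
      have := (hres d hd).resolve_left hxy
      simp only [Pi.add_apply]
      omega
    · simp only [Pi.add_apply]
      omega
  netOut_eq v := by
    rw [netOut_add, hφ.netOut_eq, netOut_walkFlow]
    push_cast
    ring

lemma sub_walkFlow (hφ : IsUnitFlow G T s t (q + 1) φ) {w : G.Walk s t} (hw : w.IsPath)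
    (hpos : ∀ d ∈ w.darts, 0 < φ d.fst d.snd) : IsUnitFlow G T s t q (φ - walkFlow w) where
  antisymm x y := by simp only [Pi.sub_apply, hφ.antisymm x y, walkFlow_antisymm w x y]; ring
  adj_of_ne_zero x y h := by
    by_cases hφxy : φ x y = 0
    · obtain ⟨d, -, hd⟩ := exists_dart_of_walkFlow_ne_zero (by simpa [hφxy] using h)
      exact G.mem_edgeSet.1 (hd ▸ d.edge_mem)
    · exact hφ.adj_of_ne_zero x y hφxy
  le_one x y hxy := by
    have := hw.walkFlow_le_one y x
    have := hφ.le_one x y hxy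
    have := walkFlow_antisymm w x y
    by_cases hneg : walkFlow w x y < 0
    · rw [walkFlow_antisymm, Left.neg_neg_iff] at hneg
      obtain ⟨d, hd, rfl, rfl⟩ := exists_dart_of_walkFlow_pos hneg
      have := hpos d hd
      have := hφ.antisymm d.fst d.snd
      simp only [Pi.sub_apply]
      omega
    · simp only [Pi.sub_apply]
      omega
  netOut_eq v := by
    rw [netOut_sub, hφ.netOut_eq, netOut_walkFlow]
    push_cast
    ring

lemma exists_isUnitFlow_succ (hφ : IsUnitFlow G T s t q φ) (hq : q < p)
    (hcut : ∀ C, mseIsCut G s t C → Disjoint C T → p ≤ C.ncard) :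
    ∃ ψ, IsUnitFlow G T s t (q + 1) ψ := by
  classical
  rcases exists_isPath_or_exists_closed_finset (G := G)
    (fun x y => s(x, y) ∈ T ∨ φ x y < 1) s t with ⟨w, hw, hres⟩ | ⟨R, hs, ht, hR⟩
  · exact ⟨_, hφ.add_walkFlow hw hres⟩
  -- no augmenting path: the edges leaving `R` form a saturated cut avoiding `T`
  have hsat : ∀ z ∈ R ×ˢ Rᶜ, φ z.1 z.2 = if G.Adj z.1 z.2 then 1 else 0 := by
    intro z hz
    rw [mem_product, mem_compl] at hz
    split_ifs with hadj
    · have := hR z.1 hz.1 z.2 hz.2 hadj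
      have := hφ.le_one z.1 z.2 (by tauto)
      omega
    · by_contra h
      exact hadj (hφ.adj_of_ne_zero _ _ h)
  have hvalue : (q : ℤ) = (G.interedges R Rᶜ).card := by
    rw [← hφ.sum_netOut hs ht, sum_netOut_eq_sum_product_compl hφ.antisymm, sum_congr rfl hsat,
      sum_boole]
    rfl
  have hdisj :
      Disjoint (↑((G.interedges R Rᶜ).image fun z => s(z.1, z.2)) : Set (Sym2 V)) T := by
    refine Set.disjoint_left.2 fun e he heT => ?_
    obtain ⟨z, hz, rfl⟩ := mem_image.1 he
    rw [mem_interedges_iff] at hz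
    exact (hR z.1 hz.1 z.2 (mem_compl.1 hz.2.1) hz.2.2) (.inl heT)
  have := hcut _ (mseIsCut_image_interedges_compl hs ht) hdisj
  rw [Set.ncard_coe_finset, card_image_interedges_compl] at this
  omega

lemma exists_isPath_flow_pos (hφ : IsUnitFlow G T s t (q + 1) φ) :
    ∃ w : G.Walk s t, w.IsPath ∧ ∀ d ∈ w.darts, 0 < φ d.fst d.snd := by
  refine (exists_isPath_or_exists_closed_finset (fun x y => 0 < φ x y) s t).resolve_right ?_
  rintro ⟨R, hs, ht, hR⟩
  have hle : ∑ z ∈ R ×ˢ Rᶜ, φ z.1 z.2 ≤ 0 := by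
    refine sum_nonpos fun z hz => ?_
    rw [mem_product, mem_compl] at hz
    by_cases hadj : G.Adj z.1 z.2
    · exact not_lt.1 (hR z.1 hz.1 z.2 hz.2 hadj)
    · by_contra h
      exact hadj (hφ.adj_of_ne_zero _ _ (by omega))
  have := hφ.sum_netOut hs ht
  rw [sum_netOut_eq_sum_product_compl hφ.antisymm] at this
  omega

lemma exists_routing (hφ : IsUnitFlow G T s t q φ) :
    ∃ P : Fin q → G.Walk s t, (∀ i, (P i).IsPath) ∧
      ∀ x y, s(x, y) ∉ T → (#{i | s(x, y) ∈ (P i).edges} : ℤ) ≤ |φ x y| := by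
  induction q generalizing φ with
  | zero => exact ⟨Fin.elim0, fun i => i.elim0, by simp⟩
  | succ q ih =>
    obtain ⟨w, hw, hpos⟩ := hφ.exists_isPath_flow_pos
    obtain ⟨P, hP, hcount⟩ := ih (hφ.sub_walkFlow hw hpos)
    refine ⟨Fin.cons w P, Fin.cases hw hP, fun x y hxy => ?_⟩
    have hcard : #{i | s(x, y) ∈ ((Fin.cons w P : Fin (q + 1) → G.Walk s t) i).edges} =
        (if s(x, y) ∈ w.edges then 1 else 0) + #{i | s(x, y) ∈ (P i).edges} := by
      rw [card_filter, Fin.sum_univ_succ, card_filter]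
      simp
    have hcountxy := hcount x y hxy
    simp only [Pi.sub_apply] at hcountxy
    rw [hcard]
    split_ifs with hxyw
    · obtain ⟨d, hd, hde⟩ := List.mem_map.1 hxyw
      have hφd : φ d.fst d.snd = 1 :=
        le_antisymm (hφ.le_one _ _ (by rw [← hde] at hxy; exact hxy)) (hpos d hd)
      have hwd := hw.walkFlow_of_mem_darts hd
      have hsat : φ x y - walkFlow w x y = 0 ∧ |φ x y| = 1 := by
        rcases Sym2.eq_iff.1 hde with ⟨rfl, rfl⟩ | ⟨rfl, rfl⟩
        · simp [hφd, hwd]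
        · simp [hφ.antisymm d.snd, walkFlow_antisymm w d.snd, hφd, hwd]
      rw [hsat.1, abs_zero] at hcountxy
      rw [hsat.2]
      push_cast
      omega
    · have hw0 : walkFlow w x y = 0 := by
        by_contra h
        obtain ⟨d, hd, hde⟩ := exists_dart_of_walkFlow_ne_zero h
        exact hxyw (hde ▸ List.mem_map_of_mem hd)
      rw [hw0, sub_zero] at hcountxy
      push_cast
      omega

end IsUnitFlow

lemma exists_isUnitFlow (hcut : ∀ C, mseIsCut G s t C → Disjoint C T → p ≤ C.ncard) :
    ∃ φ, IsUnitFlow G T s t p φ := by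
  suffices ∀ q ≤ p, ∃ φ, IsUnitFlow G T s t q φ from this p le_rfl
  intro q hq
  induction q with
  | zero => exact ⟨0, isUnitFlow_zero⟩
  | succ q ih =>
    obtain ⟨φ, hφ⟩ := ih (by omega)
    exact hφ.exists_isUnitFlow_succ (by omega) hcut

lemma exists_routing_mseSharedEdges_subset
    (hcut : ∀ C, mseIsCut G s t C → Disjoint C T → p ≤ C.ncard) :
    ∃ P : Fin p → G.Walk s t, (∀ i, (P i).IsPath) ∧ mseSharedEdges P ⊆ T := by
  obtain ⟨φ, hφ⟩ := exists_isUnitFlow hcut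
  obtain ⟨P, hP, hcount⟩ := hφ.exists_routing
  refine ⟨P, hP, fun e he => Sym2.ind (fun x y he => ?_) e he⟩
  obtain ⟨i, j, hij, hi, hj⟩ := he
  by_contra hxy
  have htwo : 1 < #{i | s(x, y) ∈ (P i).edges} :=
    one_lt_card.2 ⟨i, by simpa, j, by simpa, hij⟩
  have := hcount x y hxy
  have := hφ.abs_le_one hxy
  omega

end UnitFlow

lemma exists_mseIsMinCut_mem_of_mem_mseSharedEdges {V : Type*} [Fintype V]
    {G : SimpleGraph V} {s t : V} {p : ℕ} {P : Fin p → G.Walk s t}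
    (hmin : ∀ Q : Fin p → G.Walk s t, (∀ i, (Q i).IsPath) →
      (mseSharedEdges P).ncard ≤ (mseSharedEdges Q).ncard)
    {e : Sym2 V} (he : e ∈ mseSharedEdges P) :
    ∃ C, mseIsMinCut G s t C ∧ C.ncard ≤ p - 1 ∧ e ∈ C := by
  classical
  by_contra! he_free
  -- a cut of fewer than `p` edges contains a small minimal cut, so a shared edge other than `e`
  have hcut : ∀ C, mseIsCut G s t C → Disjoint C (mseSharedEdges P \ {e}) →
      p ≤ C.ncard := by
    intro C hC hdisj
    by_contra! hCp
    obtain ⟨D, hDC, hD⟩ := hC.exists_mseIsMinCut_subset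
    have hDp : D.ncard < p := (Set.ncard_le_ncard hDC).trans_lt hCp
    obtain ⟨g, hgD, hg⟩ := hD.1.exists_mem_mseSharedEdges hDp P
    have hge : g ≠ e := fun hge => he_free D hD (by omega) (hge ▸ hgD)
    exact Set.disjoint_left.1 hdisj (hDC hgD) ⟨hg, hge⟩
  obtain ⟨Q, hQ, hQP⟩ := exists_routing_mseSharedEdges_subset hcut
  have := hmin Q hQ
  have := Set.ncard_le_ncard hQP
  have := Set.ncard_sdiff_singleton_lt_of_mem he
  omega

theorem stmt_3_general {V : Type*} [Fintype V] (G : SimpleGraph V) (s t : V)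
    (p k : ℕ)
    (hrouting : ∃ P : Fin p → G.Walk s t,
      (∀ i, (P i).IsPath) ∧ (mseSharedEdges P).ncard ≤ k) :
    ∃ P : Fin p → G.Walk s t, (∀ i, (P i).IsPath) ∧ (mseSharedEdges P).ncard ≤ k ∧
      ∀ e ∈ mseSharedEdges P,
        ∃ C : Set (Sym2 V), mseIsMinCut G s t C ∧ C.ncard ≤ p - 1 ∧ e ∈ C := by
  obtain ⟨P₀, hP₀, hP₀k⟩ := hrouting
  obtain ⟨P, hP, hmin⟩ :=
    (measure fun P : Fin p → G.Walk s t => (mseSharedEdges P).ncard).wf.has_min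
      {P | ∀ i, (P i).IsPath} ⟨P₀, hP₀⟩
  replace hmin : ∀ Q : Fin p → G.Walk s t, (∀ i, (Q i).IsPath) →
      (mseSharedEdges P).ncard ≤ (mseSharedEdges Q).ncard := fun Q hQ => not_lt.1 (hmin Q hQ)
  exact ⟨P, hP, (hmin P₀ hP₀).trans hP₀k,
    fun e he => exists_mseIsMinCut_mem_of_mem_mseSharedEdges hmin he⟩

theorem stmt_3 {V : Type*} [Fintype V] (G : SimpleGraph V) (s t : V) (hst : s ≠ t)
    (p k : ℕ) (hp : 1 ≤ p)
    (hrouting : ∃ P : Fin p → G.Walk s t,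
      (∀ i, (P i).IsPath) ∧ (mseSharedEdges P).ncard ≤ k)
    (hmincut : ∃ C : Set (Sym2 V), mseIsMinCut G s t C ∧ C.ncard ≤ p - 1) :
    ∃ P : Fin p → G.Walk s t, (∀ i, (P i).IsPath) ∧ (mseSharedEdges P).ncard ≤ k ∧
      ∀ e ∈ mseSharedEdges P,
        ∃ C : Set (Sym2 V), mseIsMinCut G s t C ∧ C.ncard ≤ p - 1 ∧ e ∈ C :=
  stmt_3_general G s t p k hrouting
end

section
/- Let G be a finite simple undirected graph, let s and t be two distinct vertices of G, and let p ≥ 1 be an integer. Let F be a set of edges of G such that every s-t cut C of G with C ∩ F = ∅ satisfies |C| ≥ p, and suppose F is inclusion-minimal with this property (i.e., no proper subset of F has it). Then every edge e ∈ F belongs to some minimal s-t cut of G of size at most p−1. -/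
lemma mse_exists_mincut {V : Type*} [Fintype V] (G : SimpleGraph V) (s t : V) :
    ∀ C : Set (Sym2 V), mseIsCut G s t C → ∃ D, D ⊆ C ∧ mseIsMinCut G s t D := by
  have key : ∀ n : ℕ, ∀ C : Set (Sym2 V), C.ncard ≤ n → mseIsCut G s t C →
      ∃ D, D ⊆ C ∧ mseIsMinCut G s t D := by
    intro n
    induction n with
    | zero =>
      intro C hC hcut
      refine ⟨C, subset_rfl, hcut, fun C' hC' _ => ?_⟩
      have : C = ∅ := Set.ncard_eq_zero (Set.toFinite C) |>.mp (Nat.le_zero.mp hC)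
      exact absurd (this ▸ hC') (by simp [Set.ssubset_def])
    | succ n ih =>
      intro C hC hcut
      by_cases h : ∃ C' ⊂ C, mseIsCut G s t C'
      · obtain ⟨C', hsub, hcut'⟩ := h
        have hlt : C'.ncard < C.ncard := Set.ncard_lt_ncard hsub (Set.toFinite C)
        obtain ⟨D, hD, hDmin⟩ := ih C' (by omega) hcut'
        exact ⟨D, hD.trans hsub.subset, hDmin⟩
      · push_neg at h
        exact ⟨C, subset_rfl, hcut, h⟩
  intro C hcut
  exact key C.ncard C le_rfl hcut

theorem stmt_4 {V : Type*} [Fintype V] (G : SimpleGraph V) (s t : V) (hst : s ≠ t)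
    (p : ℕ) (hp : 1 ≤ p) (F : Set (Sym2 V)) (hF : F ⊆ G.edgeSet)
    (hprop : ∀ C : Set (Sym2 V), mseIsCut G s t C → C ∩ F = ∅ → p ≤ C.ncard)
    (hmin : ∀ F' ⊂ F, ¬ (∀ C : Set (Sym2 V), mseIsCut G s t C → C ∩ F' = ∅ → p ≤ C.ncard)) :
    ∀ e ∈ F, ∃ C : Set (Sym2 V), mseIsMinCut G s t C ∧ C.ncard ≤ p - 1 ∧ e ∈ C := by
  intro e he
  have hss : F \ {e} ⊂ F := Set.sdiff_singleton_ssubset.mpr he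
  have := hmin (F \ {e}) hss
  push_neg at this
  obtain ⟨C, hcut, hdisj, hlt⟩ := this
  have hCF : C ∩ F ⊆ {e} := by
    intro x ⟨hxC, hxF⟩
    by_contra hx
    exact absurd (Set.eq_empty_iff_forall_notMem.mp hdisj x ⟨hxC, hxF, hx⟩) (fun a => a)
  obtain ⟨D, hDC, hDmin⟩ := mse_exists_mincut G s t C hcut
  have heD : e ∈ D := by
    by_contra heD
    have hDF : D ∩ F = ∅ := by
      ext x
      simp only [Set.mem_inter_iff, Set.mem_empty_iff_false, iff_false, not_and]
      intro hxD hxF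
      have : x = e := hCF ⟨hDC hxD, hxF⟩
      exact heD (this ▸ hxD)
    have := hprop D hDmin.1 hDF
    have : D.ncard ≤ C.ncard := Set.ncard_le_ncard hDC (Set.toFinite C)
    omega
  refine ⟨D, hDmin, ?_, heD⟩
  have : D.ncard ≤ C.ncard := Set.ncard_le_ncard hDC (Set.toFinite C)
  omega
end

section
/- Let G be a finite simple undirected graph, let s and t be two distinct vertices of G, let H be the subdivision of G, and let p ≥ 1 and k ≥ 0 be integers. Then G admits a (p,s,t)-routing with at most k shared edges if and only if H admits a (p,s,t)-routing with at most 2k shared edges. -/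
/-- The subdivision of `G`: vertices are the vertices of `G` together with one
subdivision vertex for each edge of `G`; a vertex `u` of `G` is adjacent to a
subdivision vertex `x_e` iff `u` is an endpoint of `e`. -/
def mseSubdiv {V : Type*} (G : SimpleGraph V) : SimpleGraph (V ⊕ G.edgeSet) :=
  SimpleGraph.fromRel (fun x y =>
    ∃ (u : V) (e : G.edgeSet), u ∈ (e : Sym2 V) ∧ x = Sum.inl u ∧ y = Sum.inr e)

open SimpleGraph

section Aux

variable {V : Type*} {G : SimpleGraph V}

lemma mse_adj_inl_inr (u : V) (e : G.edgeSet) :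
    (mseSubdiv G).Adj (Sum.inl u) (Sum.inr e) ↔ u ∈ (e : Sym2 V) := by
  simp [mseSubdiv, SimpleGraph.fromRel_adj]

lemma mse_not_adj_inl_inl (u v : V) : ¬ (mseSubdiv G).Adj (Sum.inl u) (Sum.inl v) := by
  simp [mseSubdiv, SimpleGraph.fromRel_adj]

lemma mse_not_adj_inr_inr (e f : G.edgeSet) : ¬ (mseSubdiv G).Adj (Sum.inr e) (Sum.inr f) := by
  simp [mseSubdiv, SimpleGraph.fromRel_adj]

/-- Subdividing a path of `G` gives a path of the subdivision with controlled
support and edges. -/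
lemma mse_exists_subdiv {a b : V} (w : G.Walk a b) (hw : w.IsPath) :
    ∃ w' : (mseSubdiv G).Walk (Sum.inl a) (Sum.inl b),
      w'.IsPath ∧
      (∀ v : V, Sum.inl v ∈ w'.support → v ∈ w.support) ∧
      (∀ e : G.edgeSet, Sum.inr e ∈ w'.support → (e : Sym2 V) ∈ w.edges) ∧
      (∀ x ∈ w'.edges, ∃ (e : G.edgeSet) (u : V), u ∈ (e : Sym2 V) ∧
        (e : Sym2 V) ∈ w.edges ∧ x = s(Sum.inl u, Sum.inr e)) := by
  induction w with
  | nil => exact ⟨.nil, by simp, by simp, by simp, by simp⟩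
  | @cons a c b h w ih =>
    have hw' : w.IsPath := hw.of_cons
    have hanotin : a ∉ w.support := (Walk.cons_isPath_iff _ _).1 hw |>.2
    obtain ⟨q, hq, hsupl, hsupr, hedge⟩ := ih hw'
    set e : G.edgeSet := ⟨s(a,c), h⟩ with he
    have h1 : (mseSubdiv G).Adj (Sum.inl a) (Sum.inr e) := (mse_adj_inl_inr a e).2 (by simp [he])
    have h2 : (mseSubdiv G).Adj (Sum.inr e) (Sum.inl c) :=
      ((mse_adj_inl_inr c e).2 (by simp [he])).symm
    have hinre : Sum.inr e ∉ q.support := by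
      intro hc
      have := hsupr e hc
      simp only [he] at this
      exact hanotin (Walk.fst_mem_support_of_mem_edges w this)
    have hinla : Sum.inl a ∉ q.support := fun hc => hanotin (hsupl a hc)
    refine ⟨.cons h1 (.cons h2 q), ?_, ?_, ?_, ?_⟩
    · rw [Walk.cons_isPath_iff, Walk.cons_isPath_iff]
      refine ⟨⟨hq, hinre⟩, ?_⟩
      simp only [Walk.support_cons, List.mem_cons]
      push_neg
      exact ⟨by simp, hinla⟩
    · intro v hv
      simp only [Walk.support_cons, List.mem_cons] at hv
      rcases hv with h' | h' | h'
      · simp only [Sum.inl.injEq] at h'; subst h'; simp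
      · simp at h'
      · exact List.mem_cons_of_mem _ (hsupl v h')
    · intro e' hv
      simp only [Walk.support_cons, List.mem_cons] at hv
      rcases hv with h' | h' | h'
      · simp at h'
      · simp only [Sum.inr.injEq] at h'; subst h'; simp [he]
      · exact List.mem_cons_of_mem _ (hsupr e' h')
    · intro x hx
      simp only [Walk.edges_cons, List.mem_cons] at hx
      rcases hx with h' | h' | h'
      · exact ⟨e, a, by simp [he], by simp [he], h'⟩
      · refine ⟨e, c, by simp [he], by simp [he], ?_⟩
        rw [h']; exact Sym2.eq_swap.symm
      · obtain ⟨e0, u0, hu0, hmem, hx0⟩ := hedge x h'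
        exact ⟨e0, u0, hu0, List.mem_cons_of_mem _ hmem, hx0⟩

/-- Contracting a path of the subdivision between two original vertices gives a
path of `G` with controlled support and edges. -/
lemma mse_exists_contract (n : ℕ) : ∀ {a b : V}
    (w : (mseSubdiv G).Walk (Sum.inl a) (Sum.inl b)), w.length = n → w.IsPath →
    ∃ w' : G.Walk a b,
      w'.IsPath ∧
      (∀ v ∈ w'.support, Sum.inl v ∈ w.support) ∧
      (∀ e : G.edgeSet, (e : Sym2 V) ∈ w'.edges →
        ∀ u ∈ (e : Sym2 V), s(Sum.inl u, Sum.inr e) ∈ w.edges) := by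
  induction n using Nat.strong_induction_on with
  | _ n ih =>
    intro a b w hlen hw
    cases w with
    | nil => exact ⟨.nil, by simp, by simp, by simp⟩
    | @cons _ y _ h w1 =>
      cases y with
      | inl c => exact absurd h (mse_not_adj_inl_inl a c)
      | inr e =>
        cases w1 with
        | @cons _ z _ h2 w2 =>
          cases z with
          | inr f => exact absurd h2 (mse_not_adj_inr_inr e f)
          | inl c =>
            have ha : a ∈ (e : Sym2 V) := (mse_adj_inl_inr a e).1 h
            have hc : c ∈ (e : Sym2 V) := (mse_adj_inl_inr c e).1 h2.symm
            have hw1 := (Walk.cons_isPath_iff _ _).1 hw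
            have hanot : Sum.inl a ∉ (Walk.cons h2 w2).support := hw1.2
            simp only [Walk.support_cons, List.mem_cons] at hanot
            push_neg at hanot
            have hw2 : w2.IsPath := hw1.1.of_cons
            have hac : a ≠ c := by
              intro hEq
              exact hanot.2 (hEq ▸ w2.start_mem_support)
            have heq : (e : Sym2 V) = s(a, c) := (Sym2.mem_and_mem_iff hac).1 ⟨ha, hc⟩
            have hadj : G.Adj a c := by
              have := e.property
              rw [heq] at this
              exact this
            obtain ⟨q, hq, hsup, hedge⟩ := ih w2.length (by simp at hlen; omega) w2 rfl hw2
            refine ⟨.cons hadj q, ?_, ?_, ?_⟩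
            · rw [Walk.cons_isPath_iff]
              exact ⟨hq, fun hcon => hanot.2 (hsup a hcon)⟩
            · intro v hv
              simp only [Walk.support_cons, List.mem_cons] at hv ⊢
              rcases hv with h' | h'
              · exact Or.inl (by rw [h'])
              · exact Or.inr (Or.inr (hsup v h'))
            · intro e' he' u hu
              simp only [Walk.edges_cons, List.mem_cons] at he' ⊢
              rcases he' with h' | h'
              · have heeq : e' = e := Subtype.ext (h'.trans heq.symm)
                subst heeq
                rw [heq] at hu
                rw [Sym2.mem_iff] at hu
                rcases hu with rfl | rfl
                · exact Or.inl rfl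
                · exact Or.inr (Or.inl Sym2.eq_swap.symm)
              · obtain h'' := hedge e' h' u hu
                exact Or.inr (Or.inr h'')

/-- The underlying `G`-edge of a half-edge of the subdivision. -/
noncomputable def mseHalf [Nonempty V] (G : SimpleGraph V) : Sym2 (V ⊕ G.edgeSet) → Sym2 V :=
  Sym2.lift ⟨fun x y => match x, y with
    | Sum.inl _, Sum.inr e => e.val
    | Sum.inr e, Sum.inl _ => e.val
    | Sum.inl _, Sum.inl _ => s(Classical.arbitrary V, Classical.arbitrary V)
    | Sum.inr _, Sum.inr _ => s(Classical.arbitrary V, Classical.arbitrary V),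
   by intro a b; cases a <;> cases b <;> rfl⟩

lemma mseHalf_mk [Nonempty V] (u : V) (e : G.edgeSet) :
    mseHalf G s(Sum.inl u, Sum.inr e) = (e : Sym2 V) := by
  simp [mseHalf]

lemma mse_count_le [Nonempty V] [Fintype V] {S : Set (Sym2 V)}
    {T : Set (Sym2 (V ⊕ G.edgeSet))}
    (hT : ∀ x ∈ T, ∃ (e : G.edgeSet) (u : V), u ∈ (e : Sym2 V) ∧
      (e : Sym2 V) ∈ S ∧ x = s(Sum.inl u, Sum.inr e)) :
    T.ncard ≤ 2 * S.ncard := by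
  classical
  have hSf : S.Finite := Set.toFinite S
  have hTf : T.Finite := Set.toFinite T
  rw [Set.ncard_eq_toFinset_card T hTf, Set.ncard_eq_toFinset_card S hSf]
  set S' := hSf.toFinset
  set T' := hTf.toFinset
  have hmaps : ∀ y ∈ T', mseHalf G y ∈ S' := by
    intro y hy
    rw [Set.Finite.mem_toFinset] at hy
    obtain ⟨e, u, hu, heS, rfl⟩ := hT y hy
    rw [mseHalf_mk]
    exact (Set.Finite.mem_toFinset _).2 heS
  rw [Finset.card_eq_sum_card_fiberwise hmaps]
  have hbound : ∀ a ∈ S', (T'.filter fun y => mseHalf G y = a).card ≤ 2 := by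
    intro a _
    by_cases hne : (T'.filter fun y => mseHalf G y = a).Nonempty
    · obtain ⟨y0, hy0⟩ := hne
      rw [Finset.mem_filter] at hy0
      obtain ⟨e0, u0, hu0, _, hy0eq⟩ := hT y0 ((Set.Finite.mem_toFinset _).1 hy0.1)
      have he0a : (e0 : Sym2 V) = a := by rw [hy0eq, mseHalf_mk] at hy0; exact hy0.2
      induction a using Sym2.ind with
      | _ p q =>
        have hsub : (T'.filter fun y => mseHalf G y = s(p,q)) ⊆
            {s(Sum.inl p, Sum.inr e0), s(Sum.inl q, Sum.inr e0)} := by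
          intro y hy
          rw [Finset.mem_filter] at hy
          obtain ⟨e1, u1, hu1, _, rfl⟩ := hT y ((Set.Finite.mem_toFinset _).1 hy.1)
          rw [mseHalf_mk] at hy
          have he1 : e1 = e0 := Subtype.ext (hy.2.trans he0a.symm)
          subst he1
          rw [hy.2, Sym2.mem_iff] at hu1
          rcases hu1 with rfl | rfl
          · exact Finset.mem_insert_self _ _
          · exact Finset.mem_insert_of_mem (Finset.mem_singleton_self _)
        calc (T'.filter fun y => mseHalf G y = s(p,q)).card
            ≤ ({s(Sum.inl p, Sum.inr e0), s(Sum.inl q, Sum.inr e0)} :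
                Finset (Sym2 (V ⊕ G.edgeSet))).card := Finset.card_le_card hsub
          _ ≤ 2 := Finset.card_insert_le _ _ |>.trans (by simp)
    · rw [Finset.not_nonempty_iff_eq_empty] at hne
      simp [hne]
  calc ∑ a ∈ S', (T'.filter fun y => mseHalf G y = a).card
      ≤ ∑ _a ∈ S', 2 := Finset.sum_le_sum hbound
    _ = 2 * S'.card := by rw [Finset.sum_const, smul_eq_mul, mul_comm]

lemma mse_le_count [Nonempty V] [Fintype V] {S : Set (Sym2 V)}
    {T : Set (Sym2 (V ⊕ G.edgeSet))}
    (hS : ∀ x ∈ S, ∃ e : G.edgeSet, (e : Sym2 V) = x ∧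
      ∀ u ∈ (e : Sym2 V), s(Sum.inl u, Sum.inr e) ∈ T) :
    2 * S.ncard ≤ T.ncard := by
  classical
  have hSf : S.Finite := Set.toFinite S
  have hTf : T.Finite := Set.toFinite T
  rw [Set.ncard_eq_toFinset_card T hTf, Set.ncard_eq_toFinset_card S hSf]
  set S' := hSf.toFinset with hS'
  set T' := hTf.toFinset with hT'
  set T'' := T'.filter (fun y => mseHalf G y ∈ S') with hT''
  have hmaps : ∀ y ∈ T'', mseHalf G y ∈ S' := fun y hy => (Finset.mem_filter.1 hy).2
  have hbound : ∀ a ∈ S', 2 ≤ (T''.filter fun y => mseHalf G y = a).card := by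
    intro a ha
    have haS : a ∈ S := (Set.Finite.mem_toFinset _).1 ha
    obtain ⟨e0, he0, hhalf⟩ := hS a haS
    have hadj := e0.property
    rw [he0] at hadj
    induction a using Sym2.ind with
    | _ p q =>
      rw [SimpleGraph.mem_edgeSet] at hadj
      have hpq : p ≠ q := hadj.ne
      have h1 : s(Sum.inl p, Sum.inr e0) ∈ T''.filter fun y => mseHalf G y = s(p,q) := by
        rw [Finset.mem_filter, hT'', Finset.mem_filter, mseHalf_mk, he0]
        exact ⟨⟨(Set.Finite.mem_toFinset _).2 (hhalf p (by rw [he0]; simp)), ha⟩, rfl⟩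
      have h2 : s(Sum.inl q, Sum.inr e0) ∈ T''.filter fun y => mseHalf G y = s(p,q) := by
        rw [Finset.mem_filter, hT'', Finset.mem_filter, mseHalf_mk, he0]
        exact ⟨⟨(Set.Finite.mem_toFinset _).2 (hhalf q (by rw [he0]; simp)), ha⟩, rfl⟩
      have hne12 : s(Sum.inl p, Sum.inr e0) ≠ s(Sum.inl q, (Sum.inr e0 : V ⊕ G.edgeSet)) := by
        rw [Ne, Sym2.eq_iff]
        push_neg
        refine ⟨fun hc => absurd (Sum.inl.inj hc) hpq, fun hc => by simp at hc⟩
      calc 2 = ({s(Sum.inl p, Sum.inr e0), s(Sum.inl q, Sum.inr e0)} :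
            Finset (Sym2 (V ⊕ G.edgeSet))).card := by
            rw [Finset.card_insert_of_notMem (by simp [hne12]), Finset.card_singleton]
        _ ≤ _ := Finset.card_le_card (by
            intro y hy
            simp only [Finset.mem_insert, Finset.mem_singleton] at hy
            rcases hy with rfl | rfl
            · exact h1
            · exact h2)
  calc 2 * S'.card = ∑ _a ∈ S', 2 := by rw [Finset.sum_const, smul_eq_mul, mul_comm]
    _ ≤ ∑ a ∈ S', (T''.filter fun y => mseHalf G y = a).card := Finset.sum_le_sum hbound
    _ = T''.card := (Finset.card_eq_sum_card_fiberwise hmaps).symm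
    _ ≤ T'.card := Finset.card_le_card (Finset.filter_subset _ _)

end Aux

theorem stmt_5 {V : Type*} [Fintype V] (G : SimpleGraph V) (s t : V) (hst : s ≠ t)
    (p k : ℕ) (hp : 1 ≤ p) :
    (∃ P : Fin p → G.Walk s t, (∀ i, (P i).IsPath) ∧ (mseSharedEdges P).ncard ≤ k) ↔
    (∃ P : Fin p → (mseSubdiv G).Walk (Sum.inl s) (Sum.inl t),
      (∀ i, (P i).IsPath) ∧ (mseSharedEdges P).ncard ≤ 2 * k) := by
  have : Nonempty V := ⟨s⟩
  constructor
  · rintro ⟨P, hP, hcard⟩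
    choose Q hQpath _ _ hQedge using fun i => mse_exists_subdiv (P i) (hP i)
    refine ⟨Q, hQpath, ?_⟩
    have hsub : ∀ x ∈ mseSharedEdges Q, ∃ (e : G.edgeSet) (u : V), u ∈ (e : Sym2 V) ∧
        (e : Sym2 V) ∈ mseSharedEdges P ∧ x = s(Sum.inl u, Sum.inr e) := by
      intro x hx
      simp only [mseSharedEdges, Set.mem_setOf_eq] at hx
      obtain ⟨i, j, hij, hxi, hxj⟩ := hx
      obtain ⟨e, u, hu, hei, hxeq⟩ := hQedge i x hxi
      obtain ⟨e', u', hu', hej, hxeq'⟩ := hQedge j x hxj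
      have hee' : e' = e := by
        have h12 := hxeq.symm.trans hxeq'
        rw [Sym2.eq_iff] at h12
        rcases h12 with ⟨_, h2⟩ | ⟨h1, _⟩
        · exact (Sum.inr.inj h2).symm
        · simp at h1
      refine ⟨e, u, hu, ⟨i, j, hij, hei, hee' ▸ hej⟩, hxeq⟩
    calc (mseSharedEdges Q).ncard ≤ 2 * (mseSharedEdges P).ncard := mse_count_le hsub
      _ ≤ 2 * k := by omega
  · rintro ⟨Q, hQ, hcard⟩
    choose P hPpath _ hPedge using
      fun i => mse_exists_contract (Q i).length (Q i) rfl (hQ i)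
    refine ⟨P, hPpath, ?_⟩
    have hsub : ∀ x ∈ mseSharedEdges P, ∃ e : G.edgeSet, (e : Sym2 V) = x ∧
        ∀ u ∈ (e : Sym2 V), s(Sum.inl u, Sum.inr e) ∈ mseSharedEdges Q := by
      intro x hx
      simp only [mseSharedEdges, Set.mem_setOf_eq] at hx
      obtain ⟨i, j, hij, hxi, hxj⟩ := hx
      have hx' : x ∈ G.edgeSet := (P i).edges_subset_edgeSet hxi
      exact ⟨⟨x, hx'⟩, rfl, fun u hu =>
        ⟨i, j, hij, hPedge i ⟨x, hx'⟩ hxi u hu, hPedge j ⟨x, hx'⟩ hxj u hu⟩⟩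
    have hlc := mse_le_count hsub
    omega
end

section
/- Let G be a finite simple undirected graph, let s and t be two distinct vertices of G, and let H be the subdivision of G. If C is a minimal s-t cut in G, then {x_e : e ∈ C} is a minimal s-t separator in H. -/
/-- `S` is an `a`-`b` separator in `H`: `a, b ∉ S` and deleting the vertices of `S`
disconnects `a` from `b`. -/
def mseIsSeparator {W : Type*} (H : SimpleGraph W) (a b : W) (S : Set W) : Prop :=
  a ∉ S ∧ b ∉ S ∧ ∀ (ha : a ∈ (Sᶜ : Set W)) (hb : b ∈ (Sᶜ : Set W)),
    ¬ (H.induce (Sᶜ : Set W)).Reachable ⟨a, ha⟩ ⟨b, hb⟩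

/-- `S` is a minimal `a`-`b` separator: no proper subset of `S` is an `a`-`b` separator. -/
def mseIsMinSeparator {W : Type*} (H : SimpleGraph W) (a b : W) (S : Set W) : Prop :=
  mseIsSeparator H a b S ∧ ∀ S' ⊂ S, ¬ mseIsSeparator H a b S'

lemma subdiv_adj {V : Type*} (G : SimpleGraph V) (u : V) (e : G.edgeSet) :
    (mseSubdiv G).Adj (Sum.inl u) (Sum.inr e) ↔ u ∈ (e : Sym2 V) := by
  simp [mseSubdiv, SimpleGraph.fromRel_adj]

lemma subdiv_adj' {V : Type*} (G : SimpleGraph V) (x y : V ⊕ G.edgeSet)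
    (h : (mseSubdiv G).Adj x y) :
    (∃ (u : V) (e : G.edgeSet), u ∈ (e : Sym2 V) ∧ x = Sum.inl u ∧ y = Sum.inr e) ∨
    (∃ (u : V) (e : G.edgeSet), u ∈ (e : Sym2 V) ∧ y = Sum.inl u ∧ x = Sum.inr e) := by
  rcases h with ⟨-, h | h⟩
  · exact Or.inl h
  · exact Or.inr h

lemma lift_reach {V : Type*} (G : SimpleGraph V) (D : Set (Sym2 V)) {u v : V}
    (h : (G.deleteEdges D).Reachable u v) :
    ((mseSubdiv G).induce ((Sum.inr '' {e : G.edgeSet | (e : Sym2 V) ∈ D})ᶜ : Set _)).Reachable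
      ⟨Sum.inl u, by simp⟩ ⟨Sum.inl v, by simp⟩ := by
  obtain ⟨w⟩ := h
  induction w with
  | nil => rfl
  | @cons a b c hadj w ih =>
    have hG : G.Adj a b := (SimpleGraph.deleteEdges_adj.mp hadj).1
    have hD : s(a,b) ∉ D := (SimpleGraph.deleteEdges_adj.mp hadj).2
    refine SimpleGraph.Reachable.trans ?_ ih
    set e : G.edgeSet := ⟨s(a,b), hG⟩ with he
    have hmem : (Sum.inr e : V ⊕ G.edgeSet) ∈
        ((Sum.inr '' {e : G.edgeSet | (e : Sym2 V) ∈ D})ᶜ : Set _) := by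
      simp [he, hD]
    have h1 : ((mseSubdiv G).induce ((Sum.inr '' {e : G.edgeSet | (e : Sym2 V) ∈ D})ᶜ : Set _)).Adj
        ⟨Sum.inl a, by simp⟩ ⟨Sum.inr e, hmem⟩ := by
      show (mseSubdiv G).Adj (Sum.inl a) (Sum.inr e)
      exact (subdiv_adj G a e).mpr (by simp [he])
    have h2 : ((mseSubdiv G).induce ((Sum.inr '' {e : G.edgeSet | (e : Sym2 V) ∈ D})ᶜ : Set _)).Adj
        ⟨Sum.inl b, by simp⟩ ⟨Sum.inr e, hmem⟩ := by
      show (mseSubdiv G).Adj (Sum.inl b) (Sum.inr e)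
      exact (subdiv_adj G b e).mpr (by simp [he])
    exact (h1.reachable).trans h2.reachable.symm

lemma proj_reach {V : Type*} (G : SimpleGraph V) (D : Set (Sym2 V)) {t' : V}
    (ht : (Sum.inl t' : V ⊕ G.edgeSet) ∈
      ((Sum.inr '' {e : G.edgeSet | (e : Sym2 V) ∈ D})ᶜ : Set _))
    (x : ((Sum.inr '' {e : G.edgeSet | (e : Sym2 V) ∈ D})ᶜ : Set (V ⊕ G.edgeSet)))
    (z : ((Sum.inr '' {e : G.edgeSet | (e : Sym2 V) ∈ D})ᶜ : Set (V ⊕ G.edgeSet)))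
    (hz : z.1 = Sum.inl t')
    (w : ((mseSubdiv G).induce ((Sum.inr '' {e : G.edgeSet | (e : Sym2 V) ∈ D})ᶜ : Set _)).Walk
      x z) :
    (∀ u : V, x.1 = Sum.inl u → (G.deleteEdges D).Reachable u t') ∧
    (∀ e : G.edgeSet, x.1 = Sum.inr e → ∀ u ∈ (e : Sym2 V), (G.deleteEdges D).Reachable u t') := by
  induction w with
  | nil =>
    constructor
    · intro u hu
      rw [hz] at hu
      simp only [Sum.inl.injEq] at hu
      subst hu; exact SimpleGraph.Reachable.refl _
    · intro e he; rw [hz] at he; simp at he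
  | @cons x y z hadj w ih =>
    have hadj' : (mseSubdiv G).Adj x.1 y.1 := hadj
    rcases subdiv_adj' G x.1 y.1 hadj' with ⟨u, e, hue, hx, hy⟩ | ⟨v, e, hve, hy, hx⟩
    · -- x = inl u, y = inr e
      have heD : (e : Sym2 V) ∉ D := by
        have := y.2; rw [hy] at this; simpa using this
      constructor
      · intro u' hu'
        rw [hx] at hu'; simp only [Sum.inl.injEq] at hu'
        subst hu'
        exact (ih hz).2 e hy u hue
      · intro e' he'; rw [hx] at he'; simp at he'
    · -- x = inr e, y = inl v
      have heD : (e : Sym2 V) ∉ D := by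
        have := x.2; rw [hx] at this; simpa using this
      have hv : (G.deleteEdges D).Reachable v t' := (ih hz).1 v hy
      constructor
      · intro u hu; rw [hx] at hu; simp at hu
      · intro e' he' u hue
        rw [hx] at he'; simp only [Sum.inr.injEq] at he'
        subst he'
        by_cases huv : u = v
        · subst huv; exact hv
        · have hev : (e : Sym2 V) = s(u, v) :=
            (Sym2.mem_and_mem_iff huv).mp ⟨hue, hve⟩
          have hGadj : G.Adj u v := by
            have := e.2; rw [hev] at this; exact this
          have : (G.deleteEdges D).Adj u v :=
            SimpleGraph.deleteEdges_adj.mpr ⟨hGadj, by rw [← hev]; exact heD⟩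
          exact this.reachable.trans hv

theorem stmt_7 {V : Type*} [Fintype V] (G : SimpleGraph V) (s t : V) (hst : s ≠ t)
    (C : Set (Sym2 V)) (hC : mseIsMinCut G s t C) :
    mseIsMinSeparator (mseSubdiv G) (Sum.inl s) (Sum.inl t)
      (Sum.inr '' {e : G.edgeSet | (e : Sym2 V) ∈ C}) := by
  constructor
  · refine ⟨by simp, by simp, ?_⟩
    intro ha hb hreach
    obtain ⟨w⟩ := hreach
    have := (proj_reach G C hb ⟨Sum.inl s, ha⟩ ⟨Sum.inl t, hb⟩ rfl w).1 s rfl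
    exact hC.1.2 this
  · intro S' hS' hsep
    set C' : Set (Sym2 V) := Subtype.val '' {e : G.edgeSet | Sum.inr e ∈ S'} with hC'def
    have hS'sub : S' ⊆ Sum.inr '' {e : G.edgeSet | (e : Sym2 V) ∈ C} := hS'.1
    have hsetS : S' = Sum.inr '' {e : G.edgeSet | (e : Sym2 V) ∈ C'} := by
      ext y
      constructor
      · intro hy
        obtain ⟨e, -, rfl⟩ := hS'sub hy
        exact ⟨e, ⟨e, hy, rfl⟩, rfl⟩
      · rintro ⟨e, ⟨e', he', hee⟩, rfl⟩
        have : e' = e := Subtype.ext hee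
        subst this; exact he'
    have hsub : C' ⊂ C := by
      constructor
      · rintro x ⟨e, he, rfl⟩
        obtain ⟨e', he', hee⟩ := hS'sub he
        have : e' = e := Sum.inr.inj hee
        subst this; exact he'
      · intro hCC'
        obtain ⟨y, hyS, hyS'⟩ := Set.exists_of_ssubset hS'
        obtain ⟨e, heC, rfl⟩ := hyS
        have : (e : Sym2 V) ∈ C' := hCC' heC
        obtain ⟨e', he', hee⟩ := this
        have : e' = e := Subtype.ext hee
        subst this; exact hyS' he'
    have hncut := hC.2 C' hsub
    have hC'edge : C' ⊆ G.edgeSet := fun x hx => hC.1.1 (hsub.1 hx)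
    have hr : (G.deleteEdges C').Reachable s t := by
      by_contra h
      exact hncut ⟨hC'edge, h⟩
    rw [hsetS] at hsep
    exact hsep.2.2 (by simp) (by simp) (lift_reach G C' hr)
end

section
/- Let G be a finite simple undirected graph, let s and t be two distinct vertices of G, and let H be the subdivision of G. Let W be a set of subdivision vertices of H that is an s-t separator in H, and let x be a vertex of H adjacent to some vertex of W with x ∉ {s,t}. Then the set (W ∖ N_H(x)) ∪ {x} is an s-t separator in H, where N_H(x) denotes the set of neighbors of x in H. -/
open SimpleGraph Sum

lemma mse_adj_inr {V : Type*} (G : SimpleGraph V) (a : V ⊕ G.edgeSet) (e : G.edgeSet) :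
    (mseSubdiv G).Adj a (Sum.inr e) ↔ ∃ u : V, a = Sum.inl u ∧ u ∈ (e : Sym2 V) := by
  constructor
  · rintro ⟨hne, ⟨u, e', hu, rfl, he⟩ | ⟨u, e', hu, he, -⟩⟩
    · obtain rfl : e' = e := by exact (by simpa using he : e = e').symm
      exact ⟨u, rfl, hu⟩
    · simp at he
  · rintro ⟨u, rfl, hu⟩
    exact ⟨by simp, Or.inl ⟨u, e, hu, rfl, rfl⟩⟩

/-- walk avoiding S' with "degree ≤ 1 in S'ᶜ" vertices of W gives reachability in Wᶜ. -/
lemma mse_key {U : Type*} (G : SimpleGraph U) (W S' : Set U)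
    (huniq : ∀ c ∈ W, c ∉ S' → ∀ a d, G.Adj a c → G.Adj c d → a ∉ S' → d ∉ S' → a = d) :
    ∀ (n : ℕ) {a b : U} (q : G.Walk a b), q.length ≤ n → (∀ v ∈ q.support, v ∉ S') →
      ∀ (ha : a ∈ (Wᶜ : Set U)) (hb : b ∈ (Wᶜ : Set U)),
      (G.induce (Wᶜ : Set U)).Reachable ⟨a, ha⟩ ⟨b, hb⟩ := by
  intro n
  induction n with
  | zero =>
    intro a b q hq hS ha hb
    cases q with
    | nil => exact Reachable.refl _
    | cons h p => simp at hq
  | succ m ih =>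
    intro a b q hq hS ha hb
    cases q with
    | nil => exact Reachable.refl _
    | cons h q' =>
      rename_i c
      by_cases hc : c ∈ W
      · cases q' with
        | nil => exact absurd hc hb
        | cons h2 q'' =>
          rename_i d
          have hcS : c ∉ S' := hS c (by simp)
          have had : a = d :=
            huniq c hc hcS a d h h2 (hS a (by simp)) (hS d (by simp))
          cases had
          refine ih q'' (by simp at hq ⊢; omega) (fun v hv => hS v (by simp [hv])) ha hb
      · have step : (G.induce (Wᶜ : Set U)).Adj ⟨a, ha⟩ ⟨c, hc⟩ := h
        refine step.reachable.trans
          (ih q' (by simp at hq ⊢; omega) (fun v hv => hS v (by simp [hv])) hc hb)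

theorem stmt_8 {V : Type*} [Fintype V] (G : SimpleGraph V) (s t : V) (hst : s ≠ t)
    (W : Set (V ⊕ G.edgeSet)) (hW : W ⊆ Set.range Sum.inr)
    (hsep : mseIsSeparator (mseSubdiv G) (Sum.inl s) (Sum.inl t) W)
    (x : V ⊕ G.edgeSet) (hadj : ∃ w ∈ W, (mseSubdiv G).Adj x w)
    (hxs : x ≠ Sum.inl s) (hxt : x ≠ Sum.inl t) :
    mseIsSeparator (mseSubdiv G) (Sum.inl s) (Sum.inl t)
      ((W \ (mseSubdiv G).neighborSet x) ∪ {x}) := by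
  obtain ⟨hsW, htW, hsep⟩ := hsep
  set S' : Set (V ⊕ G.edgeSet) := (W \ (mseSubdiv G).neighborSet x) ∪ {x} with hS'
  have hsS : Sum.inl s ∉ S' := by
    simp only [hS', Set.mem_union, Set.mem_diff, Set.mem_singleton_iff]
    push_neg
    exact ⟨fun h => absurd h hsW, fun h => hxs h.symm⟩
  have htS : Sum.inl t ∉ S' := by
    simp only [hS', Set.mem_union, Set.mem_diff, Set.mem_singleton_iff]
    push_neg
    exact ⟨fun h => absurd h htW, fun h => hxt h.symm⟩
  refine ⟨hsS, htS, ?_⟩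
  intro ha hb hreach
  obtain ⟨p⟩ := hreach
  -- map to the big graph
  let f : (mseSubdiv G).induce (S'ᶜ : Set _) ↪g mseSubdiv G := Embedding.induce _
  have hf : ∀ v : (S'ᶜ : Set (V ⊕ G.edgeSet)), f v = v.1 := fun _ => rfl
  let q := p.map f.toHom
  have hsupp : ∀ v ∈ q.support, v ∉ S' := by
    intro v hv
    rw [Walk.support_map] at hv
    obtain ⟨w, hw, rfl⟩ := List.mem_map.mp hv
    exact w.2
  have huniq : ∀ c ∈ W, c ∉ S' → ∀ a d, (mseSubdiv G).Adj a c → (mseSubdiv G).Adj c d →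
      a ∉ S' → d ∉ S' → a = d := by
    intro c hcW hcS a d hac hcd haS hdS
    obtain ⟨e, rfl⟩ := hW hcW
    have hxc : (mseSubdiv G).Adj x (Sum.inr e) := by
      simp only [hS', Set.mem_union, Set.mem_diff, Set.mem_singleton_iff] at hcS
      push_neg at hcS
      exact hcS.1 hcW
    obtain ⟨u, rfl, hu⟩ := (mse_adj_inr G x e).mp hxc
    have hax : a ≠ Sum.inl u := fun h => haS (Or.inr h)
    have hdx : d ≠ Sum.inl u := fun h => hdS (Or.inr h)
    obtain ⟨va, rfl, hva⟩ := (mse_adj_inr G a e).mp hac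
    obtain ⟨vd, rfl, hvd⟩ := (mse_adj_inr G d e).mp hcd.symm
    obtain ⟨ev, hev⟩ := e
    induction ev using Sym2.ind with
    | _ p q =>
      simp only [Sym2.mem_iff] at hu hva hvd
      simp only [ne_eq, Sum.inl.injEq] at hax hdx
      rcases hu with rfl | rfl <;> rcases hva with rfl | rfl <;> rcases hvd with rfl | rfl <;>
        first
        | rfl
        | exact absurd rfl hax
        | exact absurd rfl hdx
  have : ((mseSubdiv G).induce (Wᶜ : Set _)).Reachable ⟨Sum.inl s, hsW⟩ ⟨Sum.inl t, htW⟩ :=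
    mse_key (mseSubdiv G) W S' huniq q.length q le_rfl hsupp hsW htW
  exact hsep hsW htW this
end

section
/- Let G be a finite simple undirected graph, let s and t be two distinct vertices of G, let H be the subdivision of G, and let ℓ ≥ 1 be an integer. Let C be a minimal s-t cut in G with |C| ≤ ℓ and let W = {x_e : e ∈ C} be the corresponding set of subdivision vertices in H. Then every vertex of the closed neighborhood N_H[W] = W ∪ {v : v is adjacent in H to some vertex of W} other than s and t belongs to some minimal s-t separator of H of size at most ℓ. -/
open Sum

theorem SimpleGraph.Reachable.of_forall_adj {V : Type*} {G : SimpleGraph V} {P : V → Prop}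
    (hP : ∀ x y, G.Adj x y → P x → P y) {x y : V} (hxy : G.Reachable x y) (hx : P x) : P y := by
  obtain ⟨p⟩ := hxy
  induction p with
  | nil => exact hx
  | cons hadj _ ih => exact ih (hP _ _ hadj hx)

theorem exists_mseIsMinSeparator_subset {W : Type*} [Finite W] {H : SimpleGraph W} {a b : W}
    {S₀ : Set W} (h : mseIsSeparator H a b S₀) : ∃ S ⊆ S₀, mseIsMinSeparator H a b S := by
  obtain ⟨S, hSS₀, hS⟩ := exists_minimal_le_of_wellFoundedLT _ S₀ h
  exact ⟨S, hSS₀, hS.prop, fun _ hS' => hS.not_prop_of_ssubset hS'⟩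

section Subdivision

variable {V : Type*} {G : SimpleGraph V}

@[simp]
theorem mseSubdiv_adj_inl_inr {u : V} {e : G.edgeSet} :
    (mseSubdiv G).Adj (inl u) (inr e) ↔ u ∈ (e : Sym2 V) := by
  simp [mseSubdiv]

@[simp]
theorem mseSubdiv_adj_inr_inl {u : V} {e : G.edgeSet} :
    (mseSubdiv G).Adj (inr e) (inl u) ↔ u ∈ (e : Sym2 V) := by
  rw [SimpleGraph.adj_comm, mseSubdiv_adj_inl_inr]

@[simp]
theorem mseSubdiv_not_adj_inl_inl {u w : V} : ¬ (mseSubdiv G).Adj (inl u) (inl w) := by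
  simp [mseSubdiv]

@[simp]
theorem mseSubdiv_not_adj_inr_inr {e f : G.edgeSet} : ¬ (mseSubdiv G).Adj (inr e) (inr f) := by
  simp [mseSubdiv]

variable (G) in
def mseSubdivVerts (X : Set (Sym2 V)) : Set (V ⊕ G.edgeSet) :=
  inr '' {f : G.edgeSet | (f : Sym2 V) ∈ X}

@[simp]
theorem inl_notMem_mseSubdivVerts {X : Set (Sym2 V)} {u : V} :
    inl u ∉ mseSubdivVerts G X := by
  simp [mseSubdivVerts]

@[simp]
theorem inr_mem_mseSubdivVerts {X : Set (Sym2 V)} {e : G.edgeSet} :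
    inr e ∈ mseSubdivVerts G X ↔ (e : Sym2 V) ∈ X := by
  simp [mseSubdivVerts]

theorem mseSubdivVerts_mono {X Y : Set (Sym2 V)} (h : X ⊆ Y) :
    mseSubdivVerts G X ⊆ mseSubdivVerts G Y :=
  Set.image_mono fun _ hf => h hf

theorem mseSubdivVerts_subset_insert (X : Set (Sym2 V)) (e : G.edgeSet) :
    mseSubdivVerts G X ⊆ insert (inr e) (mseSubdivVerts G (X \ {(e : Sym2 V)})) := by
  rintro _ ⟨f, hf, rfl⟩
  by_cases hfe : f = e
  · exact .inl (congrArg inr hfe)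
  · exact .inr ⟨f, ⟨hf, fun h => hfe (Subtype.ext h)⟩, rfl⟩

theorem ncard_mseSubdivVerts_le [Finite V] (X : Set (Sym2 V)) :
    (mseSubdivVerts G X).ncard ≤ X.ncard :=
  calc (mseSubdivVerts G X).ncard = (Subtype.val ⁻¹' X : Set G.edgeSet).ncard :=
        Set.ncard_image_of_injective _ inr_injective
    _ = (Subtype.val '' (Subtype.val ⁻¹' X : Set G.edgeSet)).ncard :=
        (Set.ncard_image_of_injective _ Subtype.val_injective).symm
    _ ≤ X.ncard := Set.ncard_le_ncard (Set.image_preimage_subset _ _)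

/- Invariant along a walk of `H - S` from `s`: an original vertex is reachable from `s` in `G - C`,
and so is every endpoint outside `S` of a subdivision vertex. -/
theorem mseIsSeparator_of_forall_mem_cut {s t : V} {C : Set (Sym2 V)}
    {S : Set (V ⊕ G.edgeSet)} (hC : ¬ (G.deleteEdges C).Reachable s t)
    (hs : inl s ∉ S) (ht : inl t ∉ S)
    (hcover : ∀ e : G.edgeSet, (e : Sym2 V) ∈ C → inr e ∈ S ∨ ∃ u ∈ (e : Sym2 V), inl u ∈ S) :
    mseIsSeparator (mseSubdiv G) (inl s) (inl t) S := by
  refine ⟨hs, ht, fun hs' ht' hst => hC ?_⟩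
  let P : (Sᶜ : Set (V ⊕ G.edgeSet)) → Prop := fun x =>
    Sum.elim (fun a => (G.deleteEdges C).Reachable s a)
      (fun e => ∀ w ∈ (e : Sym2 V), inl w ∉ S → (G.deleteEdges C).Reachable s w) x.1
  refine hst.of_forall_adj (P := P) ?_ .rfl
  rintro ⟨a | e, hx⟩ ⟨b | f, hy⟩ hadj hPx <;>
    simp only [SimpleGraph.induce_adj, mseSubdiv_adj_inl_inr, mseSubdiv_adj_inr_inl,
      mseSubdiv_not_adj_inl_inl, mseSubdiv_not_adj_inr_inr] at hadj
  · intro w hw hwS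
    by_cases haw : a = w
    · exact haw ▸ hPx
    have hf : (f : Sym2 V) = s(a, w) := (Sym2.mem_and_mem_iff haw).mp ⟨hadj, hw⟩
    have hfC : (f : Sym2 V) ∉ C := by
      intro hfC
      rcases hcover f hfC with hfS | ⟨u, hu, huS⟩
      · exact hy hfS
      · rw [hf, Sym2.mem_iff] at hu
        rcases hu with rfl | rfl
        exacts [hx huS, hwS huS]
    have hGaw : G.Adj a w := by simpa [hf] using f.2
    exact hPx.trans (SimpleGraph.Adj.reachable (by simpa [hf] using And.intro hGaw hfC))
  · exact hPx b hadj hy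

theorem not_mseIsSeparator_of_reachable {s t : V} {C' : Set (Sym2 V)}
    {S : Set (V ⊕ G.edgeSet)} (hS : S ⊆ mseSubdivVerts G C')
    (h : (G.deleteEdges C').Reachable s t) :
    ¬ mseIsSeparator (mseSubdiv G) (inl s) (inl t) S := by
  rintro ⟨-, -, hsep⟩
  have hinl (a : V) : inl a ∈ (Sᶜ : Set (V ⊕ G.edgeSet)) := fun ha =>
    inl_notMem_mseSubdivVerts (hS ha)
  refine hsep (hinl s) (hinl t) (h.of_forall_adj (P := fun a =>
    ((mseSubdiv G).induce (Sᶜ : Set _)).Reachable ⟨inl s, hinl s⟩ ⟨inl a, hinl a⟩) ?_ .rfl)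
  intro a b hab hsa
  rw [SimpleGraph.deleteEdges_adj] at hab
  let e : G.edgeSet := ⟨s(a, b), hab.1⟩
  have he : inr e ∈ (Sᶜ : Set (V ⊕ G.edgeSet)) := fun he =>
    hab.2 (inr_mem_mseSubdivVerts.mp (hS he))
  have hae : ((mseSubdiv G).induce (Sᶜ : Set _)).Adj ⟨inl a, hinl a⟩ ⟨inr e, he⟩ := by
    simp [e]
  have heb : ((mseSubdiv G).induce (Sᶜ : Set _)).Adj ⟨inr e, he⟩ ⟨inl b, hinl b⟩ := by
    simp [e]
  exact hsa.trans (hae.reachable.trans heb.reachable)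

theorem exists_mseIsMinSeparator_mem [Finite V] {s t : V} {C : Set (Sym2 V)} {e : Sym2 V}
    (hC : mseIsMinCut G s t C) (he : e ∈ C) {S₀ : Set (V ⊕ G.edgeSet)} {v : V ⊕ G.edgeSet}
    (hS₀ : mseIsSeparator (mseSubdiv G) (inl s) (inl t) S₀)
    (hS₀v : S₀ ⊆ insert v (mseSubdivVerts G (C \ {e}))) :
    ∃ S ⊆ S₀, mseIsMinSeparator (mseSubdiv G) (inl s) (inl t) S ∧ v ∈ S := by
  obtain ⟨S, hSS₀, hS⟩ := exists_mseIsMinSeparator_subset hS₀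
  refine ⟨S, hSS₀, hS, by_contra fun hv =>
    not_mseIsSeparator_of_reachable (C' := C \ {e}) ?_ ?_ hS.1⟩
  · intro x hx
    exact (hS₀v (hSS₀ hx)).resolve_left (ne_of_mem_of_not_mem hx hv)
  · by_contra hreach
    exact hC.2 _ (Set.sdiff_singleton_ssubset.mpr he) ⟨Set.sdiff_subset.trans hC.1.1, hreach⟩

theorem exists_mseIsMinSeparator_inr_mem [Finite V] {s t : V} {C : Set (Sym2 V)}
    (hC : mseIsMinCut G s t C) {e : G.edgeSet} (he : (e : Sym2 V) ∈ C) :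
    ∃ S, mseIsMinSeparator (mseSubdiv G) (inl s) (inl t) S ∧ S.ncard ≤ C.ncard ∧ inr e ∈ S := by
  have hsep : mseIsSeparator (mseSubdiv G) (inl s) (inl t) (mseSubdivVerts G C) :=
    mseIsSeparator_of_forall_mem_cut hC.1.2 inl_notMem_mseSubdivVerts
      inl_notMem_mseSubdivVerts fun f hf => .inl (inr_mem_mseSubdivVerts.mpr hf)
  obtain ⟨S, hSS₀, hS, hv⟩ :=
    exists_mseIsMinSeparator_mem hC he hsep (mseSubdivVerts_subset_insert C e)
  exact ⟨S, hS, (Set.ncard_le_ncard hSS₀).trans (ncard_mseSubdivVerts_le C), hv⟩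

theorem exists_mseIsMinSeparator_inl_mem [Finite V] {s t : V} {C : Set (Sym2 V)}
    (hC : mseIsMinCut G s t C) {e : Sym2 V} (he : e ∈ C) {u : V} (hue : u ∈ e)
    (hus : u ≠ s) (hut : u ≠ t) :
    ∃ S, mseIsMinSeparator (mseSubdiv G) (inl s) (inl t) S ∧ S.ncard ≤ C.ncard ∧ inl u ∈ S := by
  set S₀ := insert (inl u) (mseSubdivVerts G {f ∈ C | u ∉ f})
  have hCu : {f ∈ C | u ∉ f} ⊆ C \ {e} := fun f hf =>
    ⟨hf.1, fun hfe => hf.2 (Set.mem_singleton_iff.mp hfe ▸ hue)⟩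
  have hsep : mseIsSeparator (mseSubdiv G) (inl s) (inl t) S₀ := by
    refine mseIsSeparator_of_forall_mem_cut hC.1.2 (by simp [S₀, hus.symm])
      (by simp [S₀, hut.symm]) fun f hf => ?_
    by_cases huf : u ∈ (f : Sym2 V)
    · exact .inr ⟨u, huf, Set.mem_insert _ _⟩
    · exact .inl (.inr (inr_mem_mseSubdivVerts.mpr ⟨hf, huf⟩))
  obtain ⟨S, hSS₀, hS, hv⟩ :=
    exists_mseIsMinSeparator_mem hC he hsep (Set.insert_subset_insert (mseSubdivVerts_mono hCu))
  refine ⟨S, hS, ?_, hv⟩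
  calc S.ncard ≤ S₀.ncard := Set.ncard_le_ncard hSS₀
    _ ≤ (C \ {e}).ncard + 1 := (Set.ncard_insert_le _ _).trans
        (Nat.add_le_add_right ((ncard_mseSubdivVerts_le _).trans (Set.ncard_le_ncard hCu)) 1)
    _ = C.ncard := Set.ncard_sdiff_singleton_add_one he

end Subdivision

theorem stmt_9_general {V : Type*} [Fintype V] (G : SimpleGraph V) (s t : V)
    (ℓ : ℕ) (C : Set (Sym2 V))
    (hC : mseIsMinCut G s t C) (hCcard : C.ncard ≤ ℓ) :
    ∀ v : V ⊕ G.edgeSet,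
      v ∈ (Sum.inr '' {e : G.edgeSet | (e : Sym2 V) ∈ C}) ∪
          {u | ∃ w ∈ Sum.inr '' {e : G.edgeSet | (e : Sym2 V) ∈ C},
            (mseSubdiv G).Adj u w} →
      v ≠ Sum.inl s → v ≠ Sum.inl t →
      ∃ S : Set (V ⊕ G.edgeSet),
        mseIsMinSeparator (mseSubdiv G) (Sum.inl s) (Sum.inl t) S ∧
        S.ncard ≤ ℓ ∧ v ∈ S := by
  rintro v (⟨e, he, rfl⟩ | ⟨_, ⟨e, he, rfl⟩, hadj⟩) hvs hvt
  · obtain ⟨S, hS, hcard, hv⟩ := exists_mseIsMinSeparator_inr_mem hC he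
    exact ⟨S, hS, hcard.trans hCcard, hv⟩
  · obtain u | f := v
    · obtain ⟨S, hS, hcard, hv⟩ := exists_mseIsMinSeparator_inl_mem hC he
        (mseSubdiv_adj_inl_inr.mp hadj) (fun h => hvs (h ▸ rfl)) (fun h => hvt (h ▸ rfl))
      exact ⟨S, hS, hcard.trans hCcard, hv⟩
    · exact absurd hadj mseSubdiv_not_adj_inr_inr

theorem stmt_9 {V : Type*} [Fintype V] (G : SimpleGraph V) (s t : V) (hst : s ≠ t)
    (ℓ : ℕ) (hℓ : 1 ≤ ℓ) (C : Set (Sym2 V))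
    (hC : mseIsMinCut G s t C) (hCcard : C.ncard ≤ ℓ) :
    ∀ v : V ⊕ G.edgeSet,
      v ∈ (Sum.inr '' {e : G.edgeSet | (e : Sym2 V) ∈ C}) ∪
          {u | ∃ w ∈ Sum.inr '' {e : G.edgeSet | (e : Sym2 V) ∈ C},
            (mseSubdiv G).Adj u w} →
      v ≠ Sum.inl s → v ≠ Sum.inl t →
      ∃ S : Set (V ⊕ G.edgeSet),
        mseIsMinSeparator (mseSubdiv G) (Sum.inl s) (Sum.inl t) S ∧
        S.ncard ≤ ℓ ∧ v ∈ S :=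
  stmt_9_general G s t ℓ C hC hCcard
end

section
/- Let G be a finite simple undirected graph, let s and t be two distinct vertices of G, and let p ≥ 1 and k ≥ 1 be integers. Let G' be the graph obtained from G by adding k new vertices u_1, …, u_k and the edges {s,u_1}, {u_1,u_2}, …, {u_{k−1},u_k}, {u_k,t}, i.e., a path of length k+1 between s and t whose internal vertices are new. Then G admits a (p,s,t)-routing with at most k shared edges if and only if G' admits a (p+1,s,t)-routing with at most k shared edges. -/
/-- The graph obtained from `G` by adding `k` new vertices `u_1, …, u_k` forming a
path `s, u_1, …, u_k, t` of length `k+1` between `s` and `t`. -/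
def mseExtGraph {V : Type*} (G : SimpleGraph V) (s t : V) (k : ℕ) :
    SimpleGraph (V ⊕ Fin k) :=
  SimpleGraph.fromRel (fun x y =>
    (∃ a b : V, G.Adj a b ∧ x = Sum.inl a ∧ y = Sum.inl b) ∨
    (∃ i : Fin k, (i : ℕ) = 0 ∧ x = Sum.inl s ∧ y = Sum.inr i) ∨
    (∃ i j : Fin k, (j : ℕ) = (i : ℕ) + 1 ∧ x = Sum.inr i ∧ y = Sum.inr j) ∨
    (∃ i : Fin k, (i : ℕ) = k - 1 ∧ x = Sum.inr i ∧ y = Sum.inl t))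

/-!
The internal vertices `u_i` of the new path have degree two, so an `s`–`t` path through one of
them must traverse all `k + 1` edges of the new path. Hence in a routing of `G'` with at most `k`
shared edges at most one path leaves `G`; dropping it (or any path, if none leaves `G`) gives a
routing of `G`. Conversely, adding the new path to a routing of `G` shares no further edge.
-/

theorem Nat.forall_mem_Icc_of_mem_of_step {P : ℕ → Prop} {a b j : ℕ} (hj : j ∈ Set.Icc a b)
    (hPj : P j) (up : ∀ m, a ≤ m → m < b → P m → P (m + 1))
    (down : ∀ m, a ≤ m → m < b → P (m + 1) → P m) : ∀ m ∈ Set.Icc a b, P m := by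
  obtain ⟨haj, hjb⟩ := hj
  rintro m ⟨ham, hmb⟩
  rcases le_total j m with hjm | hmj
  · induction m, hjm using Nat.le_induction with
    | base => exact hPj
    | succ m hjm ih => exact up m (haj.trans hjm) hmb (ih (by omega) (by omega))
  · induction hmj using Nat.decreasingInduction with
    | self => exact hPj
    | of_succ m hmj ih => exact down m ham (by omega) (ih (by omega) (by omega))

namespace SimpleGraph

variable {V W : Type*} {G : SimpleGraph V} {H : SimpleGraph W}

theorem Walk.IsPath.mem_edges_of_neighborSet_subset {u v x a b : V} {p : G.Walk u v}
    (hp : p.IsPath) (hx : x ∈ p.support) (hxu : x ≠ u) (hxv : x ≠ v)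
    (hN : G.neighborSet x ⊆ {a, b}) : s(x, a) ∈ p.edges ∧ s(x, b) ∈ p.edges := by
  obtain ⟨i, rfl, hi⟩ := Walk.mem_support_iff_exists_getVert.mp hx
  have hi0 : i ≠ 0 := by rintro rfl; simp at hxu
  have hil : i < p.length := lt_of_le_of_ne hi (by rintro rfl; simp at hxv)
  have heq : p.toSubgraph.neighborSet (p.getVert i) = {a, b} :=
    Set.eq_of_subset_of_ncard_le ((p.toSubgraph.neighborSet_subset _).trans hN)
      ((Set.ncard_insert_le a {b}).trans
        (by simp [hp.ncard_neighborSet_toSubgraph_internal_eq_two hi0 hil]))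
      (Set.toFinite _)
  simp only [← Walk.adj_toSubgraph_iff_mem_edges, ← Subgraph.mem_neighborSet, heq]
  simp

theorem Walk.exists_map_eq_of_support_subset_range (f : G ↪g H) {a b : V}
    (w : H.Walk (f a) (f b)) (hw : ∀ y ∈ w.support, y ∈ Set.range f) :
    ∃ w' : G.Walk a b, w'.map f.toHom = w := by
  suffices ∀ {x y : W} (w : H.Walk x y) (a b : V) (hx : f a = x) (hy : f b = y),
      (∀ y ∈ w.support, y ∈ Set.range f) →
        ∃ w' : G.Walk a b, w'.map f.toHom = w.copy hx.symm hy.symm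
    from this w a b rfl rfl hw
  intro x y w
  induction w with
  | nil =>
    rintro a b rfl hy -
    obtain rfl := f.injective hy
    exact ⟨Walk.nil, rfl⟩
  | @cons _ v _ h q ih =>
    rintro a b rfl rfl hw
    obtain ⟨c, rfl⟩ := hw v (by simp)
    obtain ⟨q', hq'⟩ := ih c b rfl rfl fun y hy => hw y (by simp [hy])
    exact ⟨Walk.cons (f.map_adj_iff.mp h) q', by simpa using hq'⟩

end SimpleGraph

section SharedEdges

open SimpleGraph

variable {V W : Type*} {G : SimpleGraph V} {H : SimpleGraph W} {s t : V} {p q : ℕ}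

theorem mseSharedEdges_finite (P : Fin p → G.Walk s t) : (mseSharedEdges P).Finite :=
  (Set.finite_iUnion fun i => (P i).edges.finite_toSet).subset
    fun _ ⟨i, _, _, hi, _⟩ => Set.mem_iUnion.mpr ⟨i, hi⟩

theorem mseSharedEdges_comp_subset (P : Fin p → G.Walk s t) {σ : Fin q → Fin p}
    (hσ : Function.Injective σ) : mseSharedEdges (fun j => P (σ j)) ⊆ mseSharedEdges P :=
  fun _ ⟨i, j, hij, hi, hj⟩ => ⟨σ i, σ j, hσ.ne hij, hi, hj⟩

theorem mseSharedEdges_cons_subset (w : G.Walk s t) (P : Fin p → G.Walk s t)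
    (hw : ∀ i, ∀ e ∈ w.edges, e ∉ (P i).edges) :
    mseSharedEdges (Fin.cons w P : Fin (p + 1) → G.Walk s t) ⊆ mseSharedEdges P := by
  rintro e ⟨i, j, hij, hi, hj⟩
  cases i using Fin.cases <;> cases j using Fin.cases
  · exact absurd rfl hij
  · exact absurd (by simpa using hj) (hw _ e (by simpa using hi))
  · exact absurd (by simpa using hi) (hw _ e (by simpa using hj))
  · exact ⟨_, _, fun h => hij (congrArg Fin.succ h), by simpa using hi, by simpa using hj⟩

theorem mseSharedEdges_map (f : G →g H) (hf : Function.Injective f) (P : Fin p → G.Walk s t) :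
    mseSharedEdges (fun i => (P i).map f) = Sym2.map f '' mseSharedEdges P := by
  ext e
  simp only [mseSharedEdges, Walk.edges_map, List.mem_map, Set.mem_image, Set.mem_ofPred_eq]
  constructor
  · rintro ⟨i, j, hij, ⟨e₁, he₁, rfl⟩, ⟨e₂, he₂, he⟩⟩
    obtain rfl := Sym2.map.injective hf he
    exact ⟨e₂, ⟨i, j, hij, he₁, he₂⟩, rfl⟩
  · rintro ⟨e, ⟨i, j, hij, hi, hj⟩, rfl⟩
    exact ⟨i, j, hij, ⟨e, hi, rfl⟩, ⟨e, hj, rfl⟩⟩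

theorem ncard_mseSharedEdges_map (f : G →g H) (hf : Function.Injective f)
    (P : Fin p → G.Walk s t) :
    (mseSharedEdges (fun i => (P i).map f)).ncard = (mseSharedEdges P).ncard := by
  rw [mseSharedEdges_map f hf, Set.ncard_image_of_injective _ (Sym2.map.injective hf)]

end SharedEdges

namespace mseExtGraph

open SimpleGraph Sum

variable {V : Type*} {G : SimpleGraph V} {s t : V} {k : ℕ}

theorem adj_inl_inl {a b : V} : (mseExtGraph G s t k).Adj (inl a) (inl b) ↔ G.Adj a b := by
  simp only [mseExtGraph, fromRel_adj]
  simpa using ⟨fun ⟨_, h⟩ => h.elim id (·.symm), fun h => ⟨h.ne, .inl h⟩⟩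

def inlEmbedding (G : SimpleGraph V) (s t : V) (k : ℕ) : G ↪g mseExtGraph G s t k :=
  ⟨Function.Embedding.inl, adj_inl_inl⟩

/-- `pathVert s t k m` is the `m`-th vertex of the new path `s, u_1, …, u_k, t` (with `u_{i+1}`
encoded as `inr i`); it is `inl t` for every `m ≥ k + 1`. -/
def pathVert (s t : V) (k m : ℕ) : V ⊕ Fin k :=
  if m = 0 then inl s else if h : m - 1 < k then inr ⟨m - 1, h⟩ else inl t

@[simp] theorem pathVert_zero : pathVert s t k 0 = inl s := rfl

theorem pathVert_succ_of_lt {m : ℕ} (h : m < k) : pathVert s t k (m + 1) = inr ⟨m, h⟩ := by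
  simp [pathVert, h]

@[simp] theorem pathVert_last : pathVert s t k (k + 1) = inl t := by
  simp [pathVert]

theorem pathVert_injOn (hst : s ≠ t) : Set.InjOn (pathVert s t k) (Set.Iic (k + 1)) := by
  intro m hm n hn h
  simp only [Set.mem_Iic] at hm hn
  unfold pathVert at h
  split_ifs at h <;> simp_all [Fin.ext_iff] <;> omega

theorem adj_pathVert_succ (hk : 0 < k) {m : ℕ} (hm : m ≤ k) :
    (mseExtGraph G s t k).Adj (pathVert s t k m) (pathVert s t k (m + 1)) := by
  simp only [mseExtGraph, fromRel_adj]
  obtain _ | m := m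
  · rw [pathVert_zero, pathVert_succ_of_lt hk]
    exact ⟨by simp, .inl (.inr (.inl ⟨_, rfl, rfl, rfl⟩))⟩
  rw [pathVert_succ_of_lt hm]
  by_cases h : m + 1 < k
  · rw [pathVert_succ_of_lt h]
    exact ⟨by simp, .inl (.inr (.inr (.inl ⟨_, _, rfl, rfl, rfl⟩)))⟩
  · obtain rfl : m + 1 = k := by omega
    rw [pathVert_last]
    exact ⟨by simp, .inl (.inr (.inr (.inr ⟨_, rfl, rfl, rfl⟩)))⟩

theorem neighborSet_inr_subset (i : Fin k) :
    (mseExtGraph G s t k).neighborSet (inr i) ⊆ {pathVert s t k i, pathVert s t k (i + 2)} := by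
  intro z hz
  simp only [mem_neighborSet, mseExtGraph, fromRel_adj, ne_eq, reduceCtorEq, false_and, and_false,
    exists_false, inr.injEq, ↓existsAndEq, true_and, false_or, exists_eq_right_right',
    or_false] at hz
  simp only [Set.mem_insert_iff, Set.mem_singleton_iff]
  rcases hz with ⟨-, (⟨j, hj, rfl⟩ | ⟨hi, rfl⟩) | ⟨hi, rfl⟩ | ⟨j, hj, rfl⟩⟩
  · right
    rw [pathVert_succ_of_lt (hj ▸ j.isLt : (i : ℕ) + 1 < k)]
    exact congrArg inr (Fin.ext hj)
  · right
    rw [show (i : ℕ) + 2 = k + 1 by omega, pathVert_last]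
  · left
    rw [hi, pathVert_zero]
  · left
    rw [hj, pathVert_succ_of_lt j.isLt]

def pathEdge (s t : V) (k m : ℕ) : Sym2 (V ⊕ Fin k) :=
  s(pathVert s t k m, pathVert s t k (m + 1))

theorem pathEdge_injOn (hst : s ≠ t) : Set.InjOn (pathEdge s t k) (Set.Iic k) := by
  intro m hm n hn h
  simp only [Set.mem_Iic] at hm hn
  have inj := pathVert_injOn (k := k) hst
  rcases Sym2.eq_iff.mp h with ⟨h₁, -⟩ | ⟨h₁, h₂⟩
  · exact inj (by simp; omega) (by simp; omega) h₁
  · have := inj (by simp; omega) (by simp; omega) h₁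
    have := inj (by simp; omega) (by simp; omega) h₂
    omega

theorem pathEdge_notMem_range_map_inl (hk : 0 < k) {m : ℕ} (hm : m ≤ k) :
    pathEdge s t k m ∉ Set.range (Sym2.map (inl : V → V ⊕ Fin k)) := by
  rintro ⟨e, he⟩
  obtain ⟨i, hi⟩ : ∃ i : Fin k, inr i ∈ pathEdge s t k m := by
    obtain _ | n := m
    · refine ⟨⟨0, hk⟩, ?_⟩
      rw [pathEdge, zero_add, pathVert_succ_of_lt hk]
      exact Sym2.mem_mk_right _ _
    · exact ⟨⟨n, hm⟩, by rw [pathEdge, pathVert_succ_of_lt hm]; exact Sym2.mem_mk_left _ _⟩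
  obtain ⟨a, -, ha⟩ := Sym2.mem_map.mp (he ▸ hi)
  exact inl_ne_inr ha

def pathWalkTo (G : SimpleGraph V) (s t : V) (hk : 0 < k) :
    (m : ℕ) → m ≤ k + 1 → (mseExtGraph G s t k).Walk (inl s) (pathVert s t k m)
  | 0, _ => Walk.nil
  | m + 1, h => (pathWalkTo G s t hk m (by omega)).concat (adj_pathVert_succ hk (by omega))

theorem support_pathWalkTo (hk : 0 < k) (m : ℕ) (hm : m ≤ k + 1) :
    (pathWalkTo G s t hk m hm).support = (List.range (m + 1)).map (pathVert s t k) := by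
  induction m with
  | zero => simp [pathWalkTo]
  | succ m ih => rw [pathWalkTo, Walk.support_concat, ih, List.range_succ (n := m + 1)]; simp

theorem edges_pathWalkTo (hk : 0 < k) (m : ℕ) (hm : m ≤ k + 1) :
    (pathWalkTo G s t hk m hm).edges = (List.range m).map (pathEdge s t k) := by
  induction m with
  | zero => simp [pathWalkTo]
  | succ m ih => rw [pathWalkTo, Walk.edges_concat, ih, List.range_succ]; simp [pathEdge]

def pathWalk (G : SimpleGraph V) (s t : V) (hk : 0 < k) :
    (mseExtGraph G s t k).Walk (inl s) (inl t) :=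
  (pathWalkTo G s t hk (k + 1) le_rfl).copy rfl pathVert_last

theorem pathWalk_isPath (hst : s ≠ t) (hk : 0 < k) : (pathWalk G s t hk).IsPath := by
  rw [pathWalk, Walk.isPath_copy, Walk.isPath_def, support_pathWalkTo]
  refine (List.nodup_range).map_on fun m hm n hn h => pathVert_injOn hst ?_ ?_ h
  · simpa [Nat.lt_succ_iff] using hm
  · simpa [Nat.lt_succ_iff] using hn

theorem pathWalk_edges_notMem_edges_map_inl (hk : 0 < k) {a b : V} (w : G.Walk a b) :
    ∀ e ∈ (pathWalk G s t hk).edges, e ∉ (w.map (inlEmbedding G s t k).toHom).edges := by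
  intro e he he'
  rw [pathWalk, Walk.edges_copy, edges_pathWalkTo, List.mem_map] at he
  obtain ⟨m, hm, rfl⟩ := he
  rw [Walk.edges_map, List.mem_map] at he'
  obtain ⟨e', -, he'⟩ := he'
  exact pathEdge_notMem_range_map_inl hk (Nat.lt_succ_iff.mp (List.mem_range.mp hm)) ⟨e', he'⟩

theorem pathEdge_mem_edges_of_inr_mem_support {w : (mseExtGraph G s t k).Walk (inl s) (inl t)}
    (hw : w.IsPath) {j : Fin k} (hj : inr j ∈ w.support) {m : ℕ} (hm : m ≤ k) :
    pathEdge s t k m ∈ w.edges := by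
  have hk : 0 < k := j.pos
  have interior : ∀ n ∈ Set.Icc 1 k, pathVert s t k n ∈ w.support →
      pathEdge s t k (n - 1) ∈ w.edges ∧ pathEdge s t k n ∈ w.edges := by
    rintro _ ⟨hn, hnk⟩ hmem
    obtain ⟨n, rfl⟩ : ∃ n, _ = n + 1 := ⟨_, (Nat.sub_add_cancel hn).symm⟩
    rw [pathVert_succ_of_lt hnk] at hmem
    have := hw.mem_edges_of_neighborSet_subset hmem (by simp) (by simp)
      (neighborSet_inr_subset ⟨n, hnk⟩)
    simpa [pathEdge, pathVert_succ_of_lt hnk, Sym2.eq_swap] using this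
  have hsupp : ∀ n ∈ Set.Icc 1 k, pathVert s t k n ∈ w.support := by
    refine Nat.forall_mem_Icc_of_mem_of_step (j := j + 1) ⟨by omega, j.isLt⟩
      (by rwa [pathVert_succ_of_lt]) (fun n hn hnk h => ?_) (fun n hn hnk h => ?_)
    · exact w.snd_mem_support_of_mem_edges (interior n ⟨hn, hnk.le⟩ h).2
    · exact w.fst_mem_support_of_mem_edges (interior (n + 1) ⟨by omega, hnk⟩ h).1
  obtain _ | m := m
  · exact (interior 1 ⟨le_rfl, hk⟩ (hsupp 1 ⟨le_rfl, hk⟩)).1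
  · exact (interior (m + 1) ⟨by omega, hm⟩ (hsupp _ ⟨by omega, hm⟩)).2

theorem exists_forall_ne_support_subset_range_inl (hst : s ≠ t) {p : ℕ}
    {P : Fin (p + 1) → (mseExtGraph G s t k).Walk (inl s) (inl t)} (hP : ∀ i, (P i).IsPath)
    (hcard : (mseSharedEdges P).ncard ≤ k) :
    ∃ i₀, ∀ i ≠ i₀, ∀ x ∈ (P i).support, x ∈ Set.range inl := by
  have unique : ∀ i j a b, inr a ∈ (P i).support → inr b ∈ (P j).support → i = j := by
    intro i j a b ha hb
    by_contra hij
    have hsub : pathEdge s t k '' Set.Iic k ⊆ mseSharedEdges P := by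
      rintro _ ⟨m, hm, rfl⟩
      exact ⟨i, j, hij, pathEdge_mem_edges_of_inr_mem_support (hP i) ha hm,
        pathEdge_mem_edges_of_inr_mem_support (hP j) hb hm⟩
    have := Set.ncard_le_ncard hsub (mseSharedEdges_finite P)
    rw [(pathEdge_injOn hst).ncard_image, Set.ncard_Iic_nat] at this
    omega
  by_cases h : ∃ i a, inr a ∈ (P i).support
  · obtain ⟨i₀, a, ha⟩ := h
    refine ⟨i₀, fun i hi x hx => ?_⟩
    cases x with
    | inl v => exact ⟨v, rfl⟩
    | inr b => exact absurd (unique i i₀ b a hx ha) hi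
  · simp only [not_exists] at h
    refine ⟨0, fun i _ x hx => ?_⟩
    cases x with
    | inl v => exact ⟨v, rfl⟩
    | inr b => exact absurd hx (h i b)

end mseExtGraph

open mseExtGraph in
theorem stmt_10_general {V : Type*} (G : SimpleGraph V) (s t : V) (hst : s ≠ t)
    (p k : ℕ) (hk : 1 ≤ k) :
    (∃ P : Fin p → G.Walk s t,
      (∀ i, (P i).IsPath) ∧ (mseSharedEdges P).ncard ≤ k) ↔
    (∃ P : Fin (p + 1) → (mseExtGraph G s t k).Walk (Sum.inl s) (Sum.inl t),
      (∀ i, (P i).IsPath) ∧ (mseSharedEdges P).ncard ≤ k) := by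
  set ι := inlEmbedding G s t k
  constructor
  · rintro ⟨P, hP, hcard⟩
    refine ⟨Fin.cons (pathWalk G s t hk) fun i => (P i).map ι.toHom,
      Fin.cases (pathWalk_isPath hst hk) fun i => (hP i).map ι.injective, ?_⟩
    calc _ ≤ (mseSharedEdges fun i => (P i).map ι.toHom).ncard :=
          Set.ncard_le_ncard (mseSharedEdges_cons_subset _ _ fun i =>
            pathWalk_edges_notMem_edges_map_inl hk (P i)) (mseSharedEdges_finite _)
      _ = (mseSharedEdges P).ncard := ncard_mseSharedEdges_map _ ι.injective P
      _ ≤ k := hcard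
  · rintro ⟨P, hP, hcard⟩
    obtain ⟨i₀, hi₀⟩ := exists_forall_ne_support_subset_range_inl hst hP hcard
    choose Q hQ using fun j => (P (i₀.succAbove j)).exists_map_eq_of_support_subset_range ι
      (hi₀ _ (i₀.succAbove_ne j))
    refine ⟨Q, fun j => SimpleGraph.Walk.IsPath.of_map (f := ι.toHom) (hQ j ▸ hP _), ?_⟩
    calc (mseSharedEdges Q).ncard = (mseSharedEdges fun j => (Q j).map ι.toHom).ncard :=
          (ncard_mseSharedEdges_map _ ι.injective Q).symm
      _ = (mseSharedEdges fun j => P (i₀.succAbove j)).ncard :=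
          congrArg (fun P => (mseSharedEdges P).ncard) (funext hQ)
      _ ≤ (mseSharedEdges P).ncard :=
          Set.ncard_le_ncard (mseSharedEdges_comp_subset P Fin.succAbove_right_injective)
            (mseSharedEdges_finite P)
      _ ≤ k := hcard

theorem stmt_10 {V : Type*} [Fintype V] (G : SimpleGraph V) (s t : V) (hst : s ≠ t)
    (p k : ℕ) (hp : 1 ≤ p) (hk : 1 ≤ k) :
    (∃ P : Fin p → G.Walk s t,
      (∀ i, (P i).IsPath) ∧ (mseSharedEdges P).ncard ≤ k) ↔
    (∃ P : Fin (p + 1) → (mseExtGraph G s t k).Walk (Sum.inl s) (Sum.inl t),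
      (∀ i, (P i).IsPath) ∧ (mseSharedEdges P).ncard ≤ k) :=
  stmt_10_general G s t hst p k hk
end

section
/- Let G be a finite simple undirected graph, let s and t be two distinct vertices of G, and let p ≥ 1 and k ≥ 0 be integers. Let Q be a path in G of length k+1 with endpoints u and v such that each of the k internal vertices of Q has degree exactly 2 in G and is distinct from s and t. Then: (i) every path in G from s to t that contains at least one edge of Q contains all k+1 edges of Q; and (ii) in every (p,s,t)-routing of G with at most k shared edges, at most one member P_i of the routing contains an edge of Q. -/
open SimpleGraph Walk in
/-- A path through an internal degree-2 vertex uses every edge of `G` at that vertex. -/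
lemma mse_deg_two_all_edges {V : Type*} [Fintype V] {G : SimpleGraph V} [DecidableRel G.Adj]
    {s t x : V} (W : G.Walk s t) (hW : W.IsPath) (hx : x ∈ W.support)
    (hxs : x ≠ s) (hxt : x ≠ t) (hdeg : G.degree x = 2)
    {y : V} (hxy : G.Adj x y) : s(x, y) ∈ W.edges := by
  classical
  set W1 : G.Walk x s := (W.takeUntil x hx).reverse with hW1
  set W2 : G.Walk x t := W.dropUntil x hx with hW2
  obtain ⟨a, ha, q1, hq1⟩ := (not_nil_iff (p := W1)).mp (not_nil_of_ne hxs)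
  obtain ⟨b, hb, q2, hq2⟩ := (not_nil_iff (p := W2)).mp (not_nil_of_ne hxt)
  have hedge1 : s(x, a) ∈ (W.takeUntil x hx).edges := by
    have : s(x, a) ∈ W1.edges := by rw [hq1]; simp
    rwa [hW1, edges_reverse, List.mem_reverse] at this
  have hedge2 : s(x, b) ∈ W2.edges := by rw [hq2]; simp
  have hamem : a ∈ (W.takeUntil x hx).support := by
    have : a ∈ W1.support := by rw [hq1]; simp [support_cons]
    rwa [hW1, support_reverse, List.mem_reverse] at this
  have hbmem : b ∈ W2.support.tail := by
    rw [hq2]; simp [support_cons]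
  have hnodup : List.Nodup ((W.takeUntil x hx).support ++ W2.support.tail) := by
    have := hW.support_nodup
    rwa [← W.take_spec hx, support_append] at this
  have hab : a ≠ b := by
    intro h
    exact (List.disjoint_of_nodup_append hnodup) hamem (h ▸ hbmem)
  -- neighbor finset is {a, b}
  have hsub : ({a, b} : Finset V) ⊆ G.neighborFinset x := by
    intro z hz
    rcases Finset.mem_insert.mp hz with rfl | hz
    · exact (SimpleGraph.mem_neighborFinset G x z).mpr ha
    · rw [Finset.mem_singleton] at hz
      subst hz
      exact (SimpleGraph.mem_neighborFinset G x z).mpr hb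
  have hcard : ({a, b} : Finset V).card = 2 := Finset.card_pair hab
  have heq : ({a, b} : Finset V) = G.neighborFinset x := by
    apply Finset.eq_of_subset_of_card_le hsub
    rw [hcard]
    exact le_of_eq hdeg
  have hy : y ∈ ({a, b} : Finset V) := by
    rw [heq]
    exact (SimpleGraph.mem_neighborFinset G x y).mpr hxy
  have hWe1 : s(x, a) ∈ W.edges := W.edges_takeUntil_subset hx hedge1
  have hWe2 : s(x, b) ∈ W.edges := W.edges_dropUntil_subset hx hedge2
  rcases Finset.mem_insert.mp hy with rfl | hy
  · exact hWe1
  · rw [Finset.mem_singleton] at hy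
    subst hy
    exact hWe2

open SimpleGraph Walk in
/-- Part (i): a path containing one edge of `Q` contains all of them. -/
lemma mse_all_edges {V : Type*} [Fintype V] {G : SimpleGraph V} [DecidableRel G.Adj]
    {s t v : V} (W : G.Walk s t) (hW : W.IsPath) :
    ∀ {u : V} (Q : G.Walk u v), Q.IsPath →
      (∀ x ∈ Q.support, x ≠ u → x ≠ v → G.degree x = 2 ∧ x ≠ s ∧ x ≠ t) →
      (∃ e ∈ Q.edges, e ∈ W.edges) → ∀ f ∈ Q.edges, f ∈ W.edges := by
  intro u Q
  induction Q with
  | nil => intro _ _ _ f hf; simp at hf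
  | @cons u x v h Q' ih =>
    intro hQ hint hex f hf
    cases Q' with
    | nil =>
      obtain ⟨e, he, heW⟩ := hex
      simp only [edges_cons, edges_nil, List.mem_singleton] at he hf
      subst he; subst hf; exact heW
    | @cons x y v h' Q'' =>
      -- x is an internal vertex of Q
      have hQ' : (Walk.cons h' Q'').IsPath := (Walk.cons_isPath_iff _ _).mp hQ |>.1
      have hunotin : u ∉ (Walk.cons h' Q'').support := (Walk.cons_isPath_iff _ _).mp hQ |>.2
      have hxu : x ≠ u := by
        intro hxe
        exact hunotin (hxe ▸ Walk.start_mem_support _)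
      have hxv : x ≠ v := by
        intro hxe
        have hx : x ∉ Q''.support := ((Walk.cons_isPath_iff _ _).mp hQ').2
        exact hx (by rw [hxe]; exact Walk.end_mem_support _)
      have hxmem : x ∈ (Walk.cons h (Walk.cons h' Q'')).support := by
        simp [Walk.support_cons]
      obtain ⟨hdeg, hxs, hxt⟩ := hint x hxmem hxu hxv
      -- transfer hint to the tail
      have hint' : ∀ z ∈ (Walk.cons h' Q'').support, z ≠ x → z ≠ v →
          G.degree z = 2 ∧ z ≠ s ∧ z ≠ t := by
        intro z hz hzx hzv
        have hzu : z ≠ u := fun hze => hunotin (hze ▸ hz)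
        exact hint z (by rw [Walk.support_cons]; exact List.mem_cons_of_mem _ hz) hzu hzv
      have hfirst' : s(x, y) ∈ (Walk.cons h' Q'').edges := by simp
      -- in either case, get all of Q'.edges in W and the head edge in W
      have key : (∀ g ∈ (Walk.cons h' Q'').edges, g ∈ W.edges) ∧ s(u, x) ∈ W.edges := by
        obtain ⟨e, he, heW⟩ := hex
        rw [Walk.edges_cons, List.mem_cons] at he
        rcases he with rfl | he
        · -- e = s(u,x); propagate forward across x
          have hxW : x ∈ W.support := W.snd_mem_support_of_mem_edges heW
          have hnext : s(x, y) ∈ W.edges :=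
            mse_deg_two_all_edges W hW hxW hxs hxt hdeg h'
          exact ⟨ih hQ' hint' ⟨s(x, y), hfirst', hnext⟩, heW⟩
        · have hall := ih hQ' hint' ⟨e, he, heW⟩
          have hxyW : s(x, y) ∈ W.edges := hall _ hfirst'
          have hxW : x ∈ W.support := W.fst_mem_support_of_mem_edges hxyW
          have hux : s(x, u) ∈ W.edges :=
            mse_deg_two_all_edges W hW hxW hxs hxt hdeg h.symm
          rw [Sym2.eq_swap] at hux
          exact ⟨hall, hux⟩
      rw [Walk.edges_cons, List.mem_cons] at hf
      rcases hf with rfl | hf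
      · exact key.2
      · exact key.1 f hf

theorem stmt_14 {V : Type*} [Fintype V] (G : SimpleGraph V) [DecidableRel G.Adj]
    (s t : V) (hst : s ≠ t) (k : ℕ) (u v : V)
    (Q : G.Walk u v) (hQ : Q.IsPath) (hlen : Q.length = k + 1)
    (hint : ∀ x ∈ Q.support, x ≠ u → x ≠ v → G.degree x = 2 ∧ x ≠ s ∧ x ≠ t) :
    (∀ (W : G.Walk s t), W.IsPath → (∃ e ∈ Q.edges, e ∈ W.edges) →
      ∀ e ∈ Q.edges, e ∈ W.edges) ∧
    (∀ (p : ℕ), 1 ≤ p → ∀ P : Fin p → G.Walk s t, (∀ i, (P i).IsPath) →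
      (mseSharedEdges P).ncard ≤ k →
      ∀ i j : Fin p, (∃ e ∈ Q.edges, e ∈ (P i).edges) →
        (∃ e ∈ Q.edges, e ∈ (P j).edges) → i = j) := by
  classical
  have part1 : ∀ (W : G.Walk s t), W.IsPath → (∃ e ∈ Q.edges, e ∈ W.edges) →
      ∀ e ∈ Q.edges, e ∈ W.edges := by
    intro W hW hex
    exact mse_all_edges W hW Q hQ hint hex
  refine ⟨part1, ?_⟩
  intro p hp P hPpath hcard i j hi hj
  by_contra hij
  have hsub : (Q.edges.toFinset : Set (Sym2 V)) ⊆ mseSharedEdges P := by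
    intro e he
    have heQ : e ∈ Q.edges := by simpa using he
    exact ⟨i, j, hij, part1 (P i) (hPpath i) hi e heQ, part1 (P j) (hPpath j) hj e heQ⟩
  have hfin : (mseSharedEdges P).Finite := Set.toFinite _
  have hle : (Q.edges.toFinset : Set (Sym2 V)).ncard ≤ (mseSharedEdges P).ncard :=
    Set.ncard_le_ncard hsub hfin
  rw [Set.ncard_coe_finset] at hle
  have hnodup : Q.edges.Nodup := hQ.isTrail.edges_nodup
  rw [List.toFinset_card_of_nodup hnodup, SimpleGraph.Walk.length_edges, hlen] at hle
  omega
end
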